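/- arXiv:2007.07576 — 5 statements merged into one kernel-verified Lean document; each statement's English description precedes it below -/
import Mathlib

section
/- Fix transformations φ : F₁ → F₂ and ψ : F₂ → F₃ dinatural in all of their variables, and a morphism f : A → B of B. Let (M, L, f) be a labelled marking of the composite graph Γ(ψ) ∘ Γ(φ), let M' be a marking reachable from M by successively firing pairwise distinct transitions t₁, …, t_q each of which is labelled B by L, and let L' agree with L except that L'(t_r) = A for r = 1, …, q. Then (M', L', f) is a labelled marking and ⟨M, L, f⟩ = ⟨M', L', f⟩ as morphisms of C. -/
open CategoryTheory Opposite

universe v u v' u'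

/-- `SignObj B s` is `B` if the sign `s` is `true` (covariant) and `Bᵒᵖ` if `s` is `false`. -/
def SignObj (B : Type u) : Bool → Type u
  | true => B
  | false => Bᵒᵖ

instance signObjCategory (B : Type u) [Category.{v} B] : ∀ s : Bool, Category.{v} (SignObj B s)
  | true => inferInstanceAs (Category.{v} B)
  | false => inferInstanceAs (Category.{v} Bᵒᵖ)

/-- Interpret an object of `B` as an object of `B` or `Bᵒᵖ`, according to a sign. -/
def toSign {B : Type u} : ∀ s : Bool, B → SignObj B s
  | true, X => X
  | false, X => op X

/-- Forget the sign of an object. -/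
def unSign {B : Type u} : ∀ {s : Bool}, SignObj B s → B
  | true, X => X
  | false, X => unop X

/-- A morphism of `B`, pointing in a direction prescribed by a sign. -/
def SignHom {B : Type u} [Category.{v} B] : Bool → B → B → Type v
  | true, X, Y => X ⟶ Y
  | false, X, Y => Y ⟶ X

def toSignHom {B : Type u} [Category.{v} B] : ∀ {s : Bool} {X Y : B},
    SignHom s X Y → (toSign s X ⟶ toSign s Y)
  | true, _, _, f => f
  | false, _, _, f => f.op

def signId {B : Type u} [Category.{v} B] : ∀ (s : Bool) (X : B), SignHom s X X
  | true, X => 𝟙 X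
  | false, X => 𝟙 X

/-- The mixed-variance power category `B^α`. -/
abbrev PowCat (B : Type u) [Category.{v} B] {κ : Type} (α : κ → Bool) : Type u :=
  ∀ j : κ, SignObj B (α j)

/-- The object of `B^α` whose `j`-th entry is `A (σ j)`. -/
abbrev tup {B : Type u} [Category.{v} B] {κ ι : Type} (α : κ → Bool) (σ : κ → ι)
    (A : ι → B) : PowCat B α :=
  fun j => toSign (α j) (A (σ j))

/-- A transformation `φ : F → G` of type `σ, τ`: a family of morphisms
`φ_𝐀 : F (𝐀 σ) ⟶ G (𝐀 τ)` indexed by tuples `𝐀` of objects of `B`. -/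
def Transf {B : Type u} [Category.{v} B] {C : Type u'} [Category.{v'} C] {κa κb ι : Type}
    (α : κa → Bool) (β : κb → Bool) (F : PowCat B α ⥤ C) (G : PowCat B β ⥤ C)
    (σ : κa → ι) (τ : κb → ι) : Type _ :=
  ∀ A : ι → B, F.obj (tup α σ A) ⟶ G.obj (tup β τ A)

/-- The tuple `A` with its `i`-th entry replaced by `X`. -/
abbrev upd {ι : Type} [DecidableEq ι] {B : Type u} (A : ι → B) (i : ι) (X : B) : ι → B :=
  fun k => if k = i then X else A k

/-- The mixed-variance tuple `𝐀[X,Y/i]σ`: entries over the `i`-th variable are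
`e false` in contravariant positions, `e true` in covariant ones. -/
abbrev tupMV {B : Type u} [Category.{v} B] {κ ι : Type} [DecidableEq ι] (α : κ → Bool)
    (σ : κ → ι) (A : ι → B) (i : ι) (e : Bool → B) : PowCat B α :=
  fun j => toSign (α j) (if σ j = i then e (α j) else A (σ j))

def mvHom {B : Type u} [Category.{v} B] {e₁ e₂ : Bool → B}
    (g : e₂ false ⟶ e₁ false) (h : e₁ true ⟶ e₂ true) :
    ∀ s : Bool, SignHom s (e₁ s) (e₂ s)
  | true => h
  | false => g

/-- The canonical morphism `tupMV α σ A i e₁ ⟶ tupMV α σ A i e₂` acting by `h` on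
covariant entries over `i`, (the opposite of) `g` on contravariant entries over `i`, and
the identity elsewhere. -/
def tupMVHom {B : Type u} [Category.{v} B] {κ ι : Type} [DecidableEq ι] (α : κ → Bool)
    (σ : κ → ι) (A : ι → B) (i : ι) (e₁ e₂ : Bool → B)
    (g : e₂ false ⟶ e₁ false) (h : e₁ true ⟶ e₂ true) :
    tupMV α σ A i e₁ ⟶ tupMV α σ A i e₂ :=
  fun j => toSignHom
    (show SignHom (α j) (if σ j = i then e₁ (α j) else A (σ j))
        (if σ j = i then e₂ (α j) else A (σ j)) from
      if hj : σ j = i then by simp only [if_pos hj]; exact mvHom g h (α j)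
      else by simp only [if_neg hj]; exact signId (α j) (A (σ j)))

/-- Dinaturality of a transformation in its `i`-th variable. -/
def DinatAt {B : Type u} [Category.{v} B] {C : Type u'} [Category.{v'} C] {κa κb ι : Type}
    [DecidableEq ι] {α : κa → Bool} {β : κb → Bool} {F : PowCat B α ⥤ C} {G : PowCat B β ⥤ C}
    {σ : κa → ι} {τ : κb → ι} (φ : Transf α β F G σ τ) (i : ι) : Prop :=
  ∀ (A : ι → B) {X Y : B} (f : X ⟶ Y),
    F.map (tupMVHom α σ A i (fun s => bif s then X else Y) (fun _ => X) f (𝟙 X)) ≫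
        φ (upd A i X) ≫
        G.map (tupMVHom β τ A i (fun _ => X) (fun s => bif s then Y else X) (𝟙 X) f) =
      F.map (tupMVHom α σ A i (fun s => bif s then X else Y) (fun _ => Y) (𝟙 Y) f) ≫
        φ (upd A i Y) ≫
        G.map (tupMVHom β τ A i (fun _ => Y) (fun s => bif s then Y else X) f (𝟙 Y))

/-- Vertical composition of transformations along a cocone `ζ, ξ` on their types. -/
def vcomp {B : Type u} [Category.{v} B] {C : Type u'} [Category.{v'} C]
    {κa κb κc ι₁ ι₂ ι : Type} {α : κa → Bool} {β : κb → Bool} {γ : κc → Bool}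
    {F : PowCat B α ⥤ C} {G : PowCat B β ⥤ C} {H : PowCat B γ ⥤ C}
    {σ : κa → ι₁} {τ : κb → ι₁} {η : κb → ι₂} {θ : κc → ι₂}
    (φ : Transf α β F G σ τ) (ψ : Transf β γ G H η θ)
    (ζ : ι₁ → ι) (ξ : ι₂ → ι) (hcomm : ∀ p, ζ (τ p) = ξ (η p)) :
    Transf α γ F H (fun p => ζ (σ p)) (fun p => ξ (θ p)) :=
  fun A =>
    φ (fun x => A (ζ x)) ≫
      eqToHom (congrArg G.obj (by
        funext j
        show toSign (β j) (A (ζ (τ j))) = toSign (β j) (A (ξ (η j)))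
        rw [hcomm j])) ≫
      ψ (fun x => A (ξ x))

section LabelledMarkings

variable {B : Type u} [Category.{v} B] {C : Type u'} [Category.{v'} C]
  {wa wb wc n m : ℕ}

/-- Places of the composite graph `Γ(ψ) ∘ Γ(φ)`: the arguments of the three functors
involved, with the middle ones identified. -/
abbrev CGP (wa wb wc : ℕ) : Type := Fin wa ⊕ (Fin wb ⊕ Fin wc)

/-- Transitions of the composite graph `Γ(ψ) ∘ Γ(φ)`: the variables of `φ` followed by
those of `ψ`. -/
abbrev CGT (n m : ℕ) : Type := Fin n ⊕ Fin m

variable (α : Fin wa → Bool) (β : Fin wb → Bool) (γ : Fin wc → Bool)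
  (σ₁ : Fin wa → Fin n) (τ₁ : Fin wb → Fin n)
  (σ₂ : Fin wb → Fin m) (τ₂ : Fin wc → Fin m)

/-- The (at most one) input transition of each place of the composite graph. -/
def cgIn : CGP wa wb wc → Option (CGT n m)
  | .inl p => bif α p then none else some (.inl (σ₁ p))
  | .inr (.inl p) => some (bif β p then .inl (τ₁ p) else .inr (σ₂ p))
  | .inr (.inr p) => bif γ p then some (.inr (τ₂ p)) else none

/-- The (at most one) output transition of each place of the composite graph. -/
def cgOut : CGP wa wb wc → Option (CGT n m)
  | .inl p => bif α p then some (.inl (σ₁ p)) else none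
  | .inr (.inl p) => some (bif β p then .inr (σ₂ p) else .inl (τ₁ p))
  | .inr (.inr p) => bif γ p then none else some (.inr (τ₂ p))

/-- A transition is enabled when each of its input places carries a token. -/
def cgEnabled (M : CGP wa wb wc → ℕ) (t : CGT n m) : Prop :=
  ∀ p, cgOut α β γ σ₁ τ₁ σ₂ τ₂ p = some t → 1 ≤ M p

/-- Firing a transition of the composite graph. -/
def cgFire (M : CGP wa wb wc → ℕ) (t : CGT n m) : CGP wa wb wc → ℕ :=
  fun p =>
    if cgOut α β γ σ₁ τ₁ σ₂ τ₂ p = some t then M p - 1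
    else if cgIn α β γ σ₁ τ₁ σ₂ τ₂ p = some t then M p + 1
    else M p

/-- Firing sequences of (enabled) transitions on the composite graph. -/
inductive CGFireSeq : (CGP wa wb wc → ℕ) → List (CGT n m) → (CGP wa wb wc → ℕ) → Prop
  | nil (M : CGP wa wb wc → ℕ) : CGFireSeq M [] M
  | cons {M M' : CGP wa wb wc → ℕ} (t : CGT n m) (ts : List (CGT n m)) :
      cgEnabled α β γ σ₁ τ₁ σ₂ τ₂ M t →
      CGFireSeq (cgFire α β γ σ₁ τ₁ σ₂ τ₂ M t) ts M' → CGFireSeq M (t :: ts) M'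

variable {X Y : B}

/-- Interpret a label (`false` for the domain `X`, `true` for the codomain `Y` of the
fixed morphism `f : X ⟶ Y`) as an object of `B`. -/
def Lob (X Y : B) (b : Bool) : B := bif b then Y else X

/-- A labelled marking `(M, L, f)` for the composite graph, for `f : X ⟶ Y`:
`M` is a `{0,1}`-marking and `L` labels each transition with `X` (label `false`) or `Y`
(label `true`), coherently with `M`. -/
structure IsLabelledMarking (X Y : B) (M : CGP wa wb wc → ℕ) (L : CGT n m → Bool) : Prop where
  le_one : ∀ p, M p ≤ 1
  in_label : ∀ p t, M p = 1 → cgIn α β γ σ₁ τ₁ σ₂ τ₂ p = some t → L t = false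
  out_label : ∀ p t, M p = 1 → cgOut α β γ σ₁ τ₁ σ₂ τ₂ p = some t → L t = true
  eq_label : ∀ p t t', M p = 0 → cgIn α β γ σ₁ τ₁ σ₂ τ₂ p = some t →
    cgOut α β γ σ₁ τ₁ σ₂ τ₂ p = some t' → L t = L t'

/-- The tuple of objects (labels) at which the component of `φ` is taken. -/
def L1 (X Y : B) (L : CGT n m → Bool) : Fin n → B := fun t => Lob X Y (L (.inl t))

/-- The tuple of objects (labels) at which the component of `ψ` is taken. -/
def L2 (X Y : B) (L : CGT n m → Bool) : Fin m → B := fun t => Lob X Y (L (.inr t))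

/-- The domain tuple of the morphism associated to a labelled marking: a marked place
contributes `X` covariantly and `Y` contravariantly, an unmarked one the label of its
adjacent transition. -/
def startT (M : CGP wa wb wc → ℕ) (L : CGT n m → Bool) (X Y : B) : PowCat B α :=
  fun j => toSign (α j)
    (if M (.inl j) = 1 then (bif α j then X else Y) else Lob X Y (L (.inl (σ₁ j))))

/-- The codomain tuple of the morphism associated to a labelled marking. -/
def endT (M : CGP wa wb wc → ℕ) (L : CGT n m → Bool) (X Y : B) : PowCat B γ :=
  fun j => toSign (γ j)
    (if M (.inr (.inr j)) = 1 then (bif γ j then Y else X) else Lob X Y (L (.inr (τ₂ j))))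

variable {M : CGP wa wb wc → ℕ} {L : CGT n m → Bool}

/-- The morphism with components `x¹` (the marked-place entries are `f`). -/
def mor1 (hLM : IsLabelledMarking α β γ σ₁ τ₁ σ₂ τ₂ X Y M L) (f : X ⟶ Y) :
    startT α σ₁ M L X Y ⟶ tup α σ₁ (L1 X Y L) :=
  fun j => toSignHom
    (show SignHom (α j)
        (if M (.inl j) = 1 then (bif α j then X else Y) else Lob X Y (L (.inl (σ₁ j))))
        (Lob X Y (L (.inl (σ₁ j)))) from by
      by_cases hM : M (.inl j) = 1
      · simp only [if_pos hM]
        cases hα : α j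
        · have hL : L (.inl (σ₁ j)) = false :=
            hLM.in_label _ _ hM (by simp [cgIn, hα])
          rw [hL]; exact f
        · have hL : L (.inl (σ₁ j)) = true :=
            hLM.out_label _ _ hM (by simp [cgOut, hα])
          rw [hL]; exact f
      · simp only [if_neg hM]
        exact signId (α j) (Lob X Y (L (.inl (σ₁ j)))))

/-- The morphism with components `x²`. -/
def mor2 (hLM : IsLabelledMarking α β γ σ₁ τ₁ σ₂ τ₂ X Y M L) (f : X ⟶ Y) :
    tup β τ₁ (L1 X Y L) ⟶ tup β σ₂ (L2 X Y L) :=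
  fun j => toSignHom
    (show SignHom (β j) (Lob X Y (L (.inl (τ₁ j)))) (Lob X Y (L (.inr (σ₂ j)))) from by
      by_cases hM : M (.inr (.inl j)) = 1
      · cases hβ : β j
        · have h1 : L (.inr (σ₂ j)) = false :=
            hLM.in_label _ _ hM (by simp [cgIn, hβ])
          have h2 : L (.inl (τ₁ j)) = true :=
            hLM.out_label _ _ hM (by simp [cgOut, hβ])
          rw [h1, h2]; exact f
        · have h1 : L (.inl (τ₁ j)) = false :=
            hLM.in_label _ _ hM (by simp [cgIn, hβ])
          have h2 : L (.inr (σ₂ j)) = true :=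
            hLM.out_label _ _ hM (by simp [cgOut, hβ])
          rw [h1, h2]; exact f
      · have hM0 : M (.inr (.inl j)) = 0 := by
          have := hLM.le_one (.inr (.inl j)); omega
        cases hβ : β j
        · have h : L (.inr (σ₂ j)) = L (.inl (τ₁ j)) :=
            hLM.eq_label _ _ _ hM0 (by simp [cgIn, hβ]) (by simp [cgOut, hβ])
          rw [h]; exact signId false (Lob X Y (L (.inl (τ₁ j))))
        · have h : L (.inl (τ₁ j)) = L (.inr (σ₂ j)) :=
            hLM.eq_label _ _ _ hM0 (by simp [cgIn, hβ]) (by simp [cgOut, hβ])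
          rw [h]; exact signId true (Lob X Y (L (.inr (σ₂ j)))))

/-- The morphism with components `x³`. -/
def mor3 (hLM : IsLabelledMarking α β γ σ₁ τ₁ σ₂ τ₂ X Y M L) (f : X ⟶ Y) :
    tup γ τ₂ (L2 X Y L) ⟶ endT γ τ₂ M L X Y :=
  fun j => toSignHom
    (show SignHom (γ j) (Lob X Y (L (.inr (τ₂ j))))
        (if M (.inr (.inr j)) = 1 then (bif γ j then Y else X)
          else Lob X Y (L (.inr (τ₂ j)))) from by
      by_cases hM : M (.inr (.inr j)) = 1
      · simp only [if_pos hM]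
        cases hγ : γ j
        · have hL : L (.inr (τ₂ j)) = true :=
            hLM.out_label _ _ hM (by simp [cgOut, hγ])
          rw [hL]; exact f
        · have hL : L (.inr (τ₂ j)) = false :=
            hLM.in_label _ _ hM (by simp [cgIn, hγ])
          rw [hL]; exact f
      · simp only [if_neg hM]
        exact signId (γ j) (Lob X Y (L (.inr (τ₂ j)))))

variable {F₁ : PowCat B α ⥤ C} {F₂ : PowCat B β ⥤ C} {F₃ : PowCat B γ ⥤ C}

/-- The morphism `⟨M, L, f⟩` of `C` associated to a labelled marking. -/
def interp (φ : Transf α β F₁ F₂ σ₁ τ₁) (ψ : Transf β γ F₂ F₃ σ₂ τ₂)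
    (M : CGP wa wb wc → ℕ) (L : CGT n m → Bool)
    (hLM : IsLabelledMarking α β γ σ₁ τ₁ σ₂ τ₂ X Y M L) (f : X ⟶ Y) :
    F₁.obj (startT α σ₁ M L X Y) ⟶ F₃.obj (endT γ τ₂ M L X Y) :=
  F₁.map (mor1 α β γ σ₁ τ₁ σ₂ τ₂ hLM f) ≫ φ (L1 X Y L) ≫
    F₂.map (mor2 α β γ σ₁ τ₁ σ₂ τ₂ hLM f) ≫ ψ (L2 X Y L) ≫
    F₃.map (mor3 α β γ σ₁ τ₁ σ₂ τ₂ hLM f)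

end LabelledMarkings


/-!
Firing one enabled transition `t` labelled `Y` does not change `⟨M, L, f⟩`. Say `t` is a
variable of `φ` (the case of `ψ` is the same one step further). The labelled-marking conditions
force a place adjacent to `t` to be marked exactly when it is an input of `t`, so `x¹` and `x²`
factor through the `Y`-side of the dinaturality hexagon of `φ` at `t`, taken at the tuple of
labels (whose `t`-entry is `Y`). Passing to the `X`-side of the hexagon gives the morphism of
the fired marking, in which `t` is labelled `X`. Induction on the firing sequence concludes.

Each morphism of `B^α` in sight has components that are `f` or identities (`IsFOrId`), and
such a morphism is determined by which of its components are `f`; all the factorizations are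
checked by comparing these markers place by place.
-/

instance {α β : Type*} [BEq α] [BEq β] [ReflBEq α] [ReflBEq β] : ReflBEq (α ⊕ β) where
  rfl {s} := by
    cases s with
    | inl a => exact (BEq.rfl : (a == a) = true)
    | inr b => exact (BEq.rfl : (b == b) = true)

instance {α β : Type*} [BEq α] [BEq β] [LawfulBEq α] [LawfulBEq β] : LawfulBEq (α ⊕ β) where
  eq_of_beq {s t} h := by
    cases s <;> cases t <;>
      first | exact congrArg _ (eq_of_beq h) | exact absurd h Bool.false_ne_true

section Firing

variable {wa wb wc n m : ℕ} {α : Fin wa → Bool} {β : Fin wb → Bool} {γ : Fin wc → Bool}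
  {σ₁ : Fin wa → Fin n} {τ₁ : Fin wb → Fin n} {σ₂ : Fin wb → Fin m} {τ₂ : Fin wc → Fin m}
  {B : Type u} {X Y : B}
  {M : CGP wa wb wc → ℕ} {L : CGT n m → Bool} {t : CGT n m} {p : CGP wa wb wc}

theorem cgFire_of_out (h : cgOut α β γ σ₁ τ₁ σ₂ τ₂ p = some t) :
    cgFire α β γ σ₁ τ₁ σ₂ τ₂ M t p = M p - 1 :=
  if_pos h

theorem cgFire_of_in (hin : cgIn α β γ σ₁ τ₁ σ₂ τ₂ p = some t)
    (hout : cgOut α β γ σ₁ τ₁ σ₂ τ₂ p ≠ some t) :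
    cgFire α β γ σ₁ τ₁ σ₂ τ₂ M t p = M p + 1 := by
  rw [cgFire, if_neg hout, if_pos hin]

theorem cgFire_of_not_adj (hin : cgIn α β γ σ₁ τ₁ σ₂ τ₂ p ≠ some t)
    (hout : cgOut α β γ σ₁ τ₁ σ₂ τ₂ p ≠ some t) :
    cgFire α β γ σ₁ τ₁ σ₂ τ₂ M t p = M p := by
  rw [cgFire, if_neg hout, if_neg hin]

namespace IsLabelledMarking

variable (hLM : IsLabelledMarking α β γ σ₁ τ₁ σ₂ τ₂ X Y M L)
include hLM

theorem eq_zero_or_one (p : CGP wa wb wc) : M p = 0 ∨ M p = 1 := by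
  have := hLM.le_one p; omega

theorem eq_one_of_out (hen : cgEnabled α β γ σ₁ τ₁ σ₂ τ₂ M t)
    (h : cgOut α β γ σ₁ τ₁ σ₂ τ₂ p = some t) : M p = 1 := by
  have := hen p h; have := hLM.le_one p; omega

theorem eq_zero_of_in (hLt : L t = true) (h : cgIn α β γ σ₁ τ₁ σ₂ τ₂ p = some t) : M p = 0 :=
  (hLM.eq_zero_or_one p).resolve_right fun h1 => by simp [hLM.in_label p t h1 h] at hLt

theorem out_ne_of_in (hen : cgEnabled α β γ σ₁ τ₁ σ₂ τ₂ M t) (hLt : L t = true)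
    (h : cgIn α β γ σ₁ τ₁ σ₂ τ₂ p = some t) : cgOut α β γ σ₁ τ₁ σ₂ τ₂ p ≠ some t := fun h' => by
  have := hLM.eq_one_of_out hen h'; have := hLM.eq_zero_of_in hLt h; omega

theorem eq_one_iff (hen : cgEnabled α β γ σ₁ τ₁ σ₂ τ₂ M t) (hLt : L t = true)
    (hadj : cgIn α β γ σ₁ τ₁ σ₂ τ₂ p = some t ∨ cgOut α β γ σ₁ τ₁ σ₂ τ₂ p = some t) :
    M p = 1 ↔ cgOut α β γ σ₁ τ₁ σ₂ τ₂ p = some t := by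
  refine ⟨fun hM => hadj.resolve_left fun hin => ?_, hLM.eq_one_of_out hen⟩
  have := hLM.eq_zero_of_in hLt hin; omega

theorem fire_eq_one_iff (hen : cgEnabled α β γ σ₁ τ₁ σ₂ τ₂ M t) (hLt : L t = true)
    (hadj : cgIn α β γ σ₁ τ₁ σ₂ τ₂ p = some t ∨ cgOut α β γ σ₁ τ₁ σ₂ τ₂ p = some t) :
    cgFire α β γ σ₁ τ₁ σ₂ τ₂ M t p = 1 ↔ cgIn α β γ σ₁ τ₁ σ₂ τ₂ p = some t := by
  by_cases hout : cgOut α β γ σ₁ τ₁ σ₂ τ₂ p = some t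
  · rw [cgFire_of_out hout, hLM.eq_one_of_out hen hout]
    simpa using hLM.out_ne_of_in hen hLt |>.mt (not_not.mpr hout)
  · have hin := hadj.resolve_right hout
    rw [cgFire_of_in hin hout, hLM.eq_zero_of_in hLt hin]
    simpa using hin

theorem fire (hen : cgEnabled α β γ σ₁ τ₁ σ₂ τ₂ M t) (hLt : L t = true) :
    IsLabelledMarking α β γ σ₁ τ₁ σ₂ τ₂ X Y (cgFire α β γ σ₁ τ₁ σ₂ τ₂ M t)
      (Function.update L t false) := by
  have hne : ∀ {p t'}, M p = 1 → cgIn α β γ σ₁ τ₁ σ₂ τ₂ p = some t' → t' ≠ t :=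
    fun hM hin ht => by simp [ht ▸ hLM.in_label _ _ hM hin] at hLt
  constructor
  · intro p
    by_cases hout : cgOut α β γ σ₁ τ₁ σ₂ τ₂ p = some t
    · rw [cgFire_of_out hout]; have := hLM.le_one p; omega
    by_cases hin : cgIn α β γ σ₁ τ₁ σ₂ τ₂ p = some t
    · rw [cgFire_of_in hin hout, hLM.eq_zero_of_in hLt hin]
    · rw [cgFire_of_not_adj hin hout]; exact hLM.le_one p
  · intro p t' hM' hin
    by_cases ht' : t' = t
    · rw [ht', Function.update_self]
    rw [Function.update_of_ne ht']
    by_cases hout : cgOut α β γ σ₁ τ₁ σ₂ τ₂ p = some t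
    · rw [cgFire_of_out hout, hLM.eq_one_of_out hen hout] at hM'; simp at hM'
    rw [cgFire_of_not_adj (fun h => ht' (Option.some_injective _ (hin.symm.trans h))) hout] at hM'
    exact hLM.in_label p t' hM' hin
  · intro p t' hM' hout
    by_cases hout' : cgOut α β γ σ₁ τ₁ σ₂ τ₂ p = some t
    · rw [cgFire_of_out hout', hLM.eq_one_of_out hen hout'] at hM'; simp at hM'
    have ht' : t' ≠ t := fun h => hout' (h ▸ hout)
    rw [Function.update_of_ne ht']
    by_cases hin : cgIn α β γ σ₁ τ₁ σ₂ τ₂ p = some t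
    · rw [← hLt]; exact (hLM.eq_label p t t' (hLM.eq_zero_of_in hLt hin) hin hout).symm
    rw [cgFire_of_not_adj hin hout'] at hM'
    exact hLM.out_label p t' hM' hout
  · intro p t₁ t₂ hM' hin hout
    by_cases hout' : cgOut α β γ σ₁ τ₁ σ₂ τ₂ p = some t
    · obtain rfl : t₂ = t := Option.some_injective _ (hout.symm.trans hout')
      have hM := hLM.eq_one_of_out hen hout'
      rw [Function.update_of_ne (hne hM hin), Function.update_self, hLM.in_label p t₁ hM hin]
    by_cases hin' : cgIn α β γ σ₁ τ₁ σ₂ τ₂ p = some t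
    · rw [cgFire_of_in hin' hout'] at hM'; omega
    rw [cgFire_of_not_adj hin' hout'] at hM'
    rw [Function.update_of_ne (fun h : t₁ = t => hin' (h ▸ hin)),
      Function.update_of_ne (fun h : t₂ = t => hout' (h ▸ hout)), hLM.eq_label p t₁ t₂ hM' hin hout]

end IsLabelledMarking

end Firing

section FOrId

variable {B : Type u} [Category.{v} B] {X Y : B}

def FOrIdCond (X Y : B) : Bool → Bool → B → B → Prop
  | true, true, P, Q => P = X ∧ Q = Y
  | false, true, P, Q => P = Y ∧ Q = X
  | _, false, P, Q => P = Q

def fOrId (f : X ⟶ Y) : ∀ (s mk : Bool) (P Q : B), FOrIdCond X Y s mk P Q → SignHom s P Q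
  | true, false, _, _, h => eqToHom h
  | false, false, _, _, h => eqToHom h.symm
  | true, true, _, _, h => eqToHom h.1 ≫ f ≫ eqToHom h.2.symm
  | false, true, _, _, h => eqToHom h.2 ≫ f ≫ eqToHom h.1.symm

def IsFOrId (f : X ⟶ Y) {s : Bool} {P Q : B} (mk : Bool) (u : toSign s P ⟶ toSign s Q) :
    Prop :=
  ∃ h, u = toSignHom (fOrId f s mk P Q h)

variable {f : X ⟶ Y} {s : Bool} {P Q R : B} {mk mk₁ mk₂ : Bool}

theorem IsFOrId.unique {u v : toSign s P ⟶ toSign s Q} (hu : IsFOrId f mk u)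
    (hv : IsFOrId f mk v) : u = v := by
  obtain ⟨_, rfl⟩ := hu; obtain ⟨_, rfl⟩ := hv; rfl

theorem IsFOrId.eq_eqToHom {u : toSign s P ⟶ toSign s Q} (hu : IsFOrId f false u) :
    ∃ h : P = Q, u = eqToHom (congrArg (toSign s) h) := by
  obtain ⟨h, rfl⟩ := hu
  cases s
  · exact ⟨h, by subst h; rfl⟩
  · exact ⟨h, by subst h; rfl⟩

theorem isFOrId_eqToHom (f : X ⟶ Y) (e : toSign s P = toSign s Q) :
    IsFOrId f false (eqToHom e) := by
  have h : P = Q := by cases s; exacts [congrArg unop e, e]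
  subst h
  cases s
  · exact ⟨rfl, rfl⟩
  · exact ⟨rfl, rfl⟩

theorem IsFOrId.comp {u : toSign s P ⟶ toSign s Q} {v : toSign s Q ⟶ toSign s R}
    (hu : IsFOrId f mk₁ u) (hv : IsFOrId f mk₂ v) (h : mk₁ = false ∨ mk₂ = false) :
    IsFOrId f (mk₁ || mk₂) (u ≫ v) := by
  rcases h with rfl | rfl
  · obtain ⟨rfl, rfl⟩ := hu.eq_eqToHom
    simpa using hv
  · obtain ⟨rfl, rfl⟩ := hv.eq_eqToHom
    simpa using hu

theorem isFOrId_signId (f : X ⟶ Y) : IsFOrId f false (toSignHom (signId s P)) := by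
  cases s
  · exact ⟨rfl, rfl⟩
  · exact ⟨rfl, rfl⟩

theorem isFOrId_id (f : X ⟶ Y) : IsFOrId f false (toSignHom (s := true) (𝟙 P)) :=
  isFOrId_signId f

theorem isFOrId_id_op (f : X ⟶ Y) : IsFOrId f false (toSignHom (s := false) (𝟙 P)) :=
  isFOrId_signId f

theorem isFOrId_hom (f : X ⟶ Y) : IsFOrId f true (toSignHom (s := true) f) :=
  ⟨⟨rfl, rfl⟩, by simp [fOrId, toSignHom]; rfl⟩

theorem isFOrId_hom_op (f : X ⟶ Y) : IsFOrId f true (toSignHom (s := false) f) :=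
  ⟨⟨rfl, rfl⟩, by simp [fOrId, toSignHom]; rfl⟩

theorem isFOrId_mpr {P₀ Q₀ : B} (hP : P = P₀) (hQ : Q = Q₀)
    (e : SignHom s P Q = SignHom s P₀ Q₀) (u : SignHom s P₀ Q₀)
    (hu : IsFOrId f mk (toSignHom u)) : IsFOrId f mk (toSignHom (Eq.mpr e u)) := by
  subst hP hQ; exact hu

end FOrId

section FOrIdPi

variable {B : Type u} [Category.{v} B] {X Y : B} {f : X ⟶ Y} {κ : Type} {s : κ → Bool}
  {P Q R : κ → B} {mk mk' mk₁ mk₂ : κ → Bool}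

def IsFOrIdPi (f : X ⟶ Y) (mk : κ → Bool)
    (u : (fun j => toSign (s j) (P j) : PowCat B s) ⟶ fun j => toSign (s j) (Q j)) : Prop :=
  ∀ j, IsFOrId f (mk j) (u j)

variable {u v : (fun j => toSign (s j) (P j) : PowCat B s) ⟶ fun j => toSign (s j) (Q j)}

theorem IsFOrIdPi.unique (hu : IsFOrIdPi f mk u) (hv : IsFOrIdPi f mk v) : u = v :=
  funext fun j => (hu j).unique (hv j)

theorem IsFOrIdPi.of_mk_eq (hu : IsFOrIdPi f mk u) (h : mk = mk') : IsFOrIdPi f mk' u :=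
  h ▸ hu

theorem IsFOrIdPi.comp
    {w : (fun j => toSign (s j) (Q j) : PowCat B s) ⟶ fun j => toSign (s j) (R j)}
    (hu : IsFOrIdPi f mk₁ u) (hw : IsFOrIdPi f mk₂ w) (h : ∀ j, mk₁ j = false ∨ mk₂ j = false) :
    IsFOrIdPi f (fun j => mk₁ j || mk₂ j) (u ≫ w) :=
  fun j => (hu j).comp (hw j) (h j)

theorem isFOrIdPi_eqToHom (f : X ⟶ Y)
    (e : (fun j => toSign (s j) (P j) : PowCat B s) = fun j => toSign (s j) (Q j)) :
    IsFOrIdPi f (fun _ => false) (eqToHom e) := fun j => by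
  rw [Functor.eqToHom_proj]; exact isFOrId_eqToHom f _

theorem exists_isFOrIdPi (f : X ⟶ Y) (h : ∀ j, FOrIdCond X Y (s j) (mk j) (P j) (Q j)) :
    ∃ u : (fun j => toSign (s j) (P j) : PowCat B s) ⟶ fun j => toSign (s j) (Q j),
      IsFOrIdPi f mk u :=
  ⟨fun j => toSignHom (fOrId f _ _ _ _ (h j)), fun j => ⟨h j, rfl⟩⟩

end FOrIdPi

section Components

variable {B : Type u} [Category.{v} B] {X Y : B}

/- The next four lemmas restate the tactic-built bodies of `mor1`, `mor2`, `mor3` and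
`tupMVHom` with the data they case on generalized, so that those cases can be split. -/

theorem isFOrId_mor1_body (f : X ⟶ Y) (b : Bool) (k : ℕ) (ℓ : Bool)
    (hin : k = 1 → b = false → ℓ = false) (hout : k = 1 → b = true → ℓ = true) :
    IsFOrId f (decide (k = 1))
      (toSignHom (show SignHom b (if k = 1 then (bif b then X else Y) else Lob X Y ℓ)
          (Lob X Y ℓ) from by
        by_cases hM : k = 1
        · simp only [if_pos hM]
          cases hα : b
          · have hL : ℓ = false := hin hM hα
            rw [hL]; exact f
          · have hL : ℓ = true := hout hM hα
            rw [hL]; exact f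
        · simp only [if_neg hM]
          exact signId b (Lob X Y ℓ))) := by
  by_cases hM : k = 1
  · rw [decide_eq_true hM]
    cases b
    · obtain rfl := hin hM rfl
      subst hM
      exact ⟨⟨rfl, rfl⟩, by simp [fOrId, toSignHom, Lob]; exact (Category.comp_id _).symm⟩
    · obtain rfl := hout hM rfl
      subst hM
      exact ⟨⟨rfl, rfl⟩, by simp [fOrId, toSignHom, Lob]; exact (Category.comp_id _).symm⟩
  · rw [decide_eq_false hM, dif_neg hM]
    exact isFOrId_mpr (if_neg hM) rfl _ _ (isFOrId_signId f)

theorem isFOrId_mor2_body (f : X ⟶ Y) (b : Bool) (k : ℕ) (ℓ₁ ℓ₂ : Bool)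
    (h1f : k = 1 → b = false → ℓ₂ = false) (h2f : k = 1 → b = false → ℓ₁ = true)
    (h1t : k = 1 → b = true → ℓ₁ = false) (h2t : k = 1 → b = true → ℓ₂ = true)
    (hle : k ≤ 1)
    (hqf : k = 0 → b = false → ℓ₂ = ℓ₁) (hqt : k = 0 → b = true → ℓ₁ = ℓ₂) :
    IsFOrId f (decide (k = 1))
      (toSignHom (show SignHom b (Lob X Y ℓ₁) (Lob X Y ℓ₂) from by
        by_cases hM : k = 1
        · cases hα : b
          · have h1 : ℓ₂ = false := h1f hM hα
            have h2 : ℓ₁ = true := h2f hM hα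
            rw [h1, h2]; exact f
          · have h1 : ℓ₁ = false := h1t hM hα
            have h2 : ℓ₂ = true := h2t hM hα
            rw [h1, h2]; exact f
        · have hM0 : k = 0 := by omega
          cases hα : b
          · have h : ℓ₂ = ℓ₁ := hqf hM0 hα
            rw [h]; exact signId false (Lob X Y ℓ₁)
          · have h : ℓ₁ = ℓ₂ := hqt hM0 hα
            rw [h]; exact signId true (Lob X Y ℓ₂))) := by
  by_cases hM : k = 1
  · rw [decide_eq_true hM, dif_pos hM]
    cases b
    · obtain rfl := h1f hM rfl
      obtain rfl := h2f hM rfl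
      exact ⟨⟨rfl, rfl⟩, by simp [fOrId, toSignHom, Lob]; exact (by simp : f.op = 𝟙 _ ≫ f.op ≫ 𝟙 _)⟩
    · obtain rfl := h1t hM rfl
      obtain rfl := h2t hM rfl
      exact ⟨⟨rfl, rfl⟩, by simp [fOrId, toSignHom, Lob]; exact (by simp : f = 𝟙 _ ≫ f ≫ 𝟙 _)⟩
  · rw [decide_eq_false hM, dif_neg hM]
    have hM0 : k = 0 := by omega
    cases b
    · obtain rfl := hqf hM0 rfl
      exact isFOrId_mpr rfl rfl _ _ (isFOrId_signId f)
    · obtain rfl := hqt hM0 rfl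
      exact isFOrId_mpr rfl rfl _ _ (isFOrId_signId f)

theorem isFOrId_mor3_body (f : X ⟶ Y) (b : Bool) (k : ℕ) (ℓ : Bool)
    (hout : k = 1 → b = false → ℓ = true) (hin : k = 1 → b = true → ℓ = false) :
    IsFOrId f (decide (k = 1))
      (toSignHom (show SignHom b (Lob X Y ℓ)
          (if k = 1 then (bif b then Y else X) else Lob X Y ℓ) from by
        by_cases hM : k = 1
        · simp only [if_pos hM]
          cases hα : b
          · have hL : ℓ = true := hout hM hα
            rw [hL]; exact f
          · have hL : ℓ = false := hin hM hα
            rw [hL]; exact f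
        · simp only [if_neg hM]
          exact signId b (Lob X Y ℓ))) := by
  by_cases hM : k = 1
  · rw [decide_eq_true hM]
    cases b
    · obtain rfl := hout hM rfl
      subst hM
      exact ⟨⟨rfl, rfl⟩, by simp [fOrId, toSignHom, Lob]; exact (Category.id_comp _).symm⟩
    · obtain rfl := hin hM rfl
      subst hM
      exact ⟨⟨rfl, rfl⟩, by simp [fOrId, toSignHom, Lob]; exact (Category.id_comp _).symm⟩
  · rw [decide_eq_false hM, dif_neg hM]
    exact isFOrId_mpr rfl (if_neg hM) _ _ (isFOrId_signId f)

theorem isFOrId_tupMVHom_body {f : X ⟶ Y} (p : Prop) [Decidable p] (b : Bool) (P : B)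
    {e₁ e₂ : Bool → B}
    {g : e₂ false ⟶ e₁ false} {h : e₁ true ⟶ e₂ true} {mkg mkh : Bool}
    (hg : IsFOrId f mkg (toSignHom (s := false) g)) (hh : IsFOrId f mkh (toSignHom (s := true) h)) :
    IsFOrId f (decide p && bif b then mkh else mkg)
      (toSignHom
        (show SignHom b (if p then e₁ b else P) (if p then e₂ b else P) from
          if hj : p then by simp only [if_pos hj]; exact mvHom g h b
          else by simp only [if_neg hj]; exact signId b P)) := by
  by_cases hj : p
  · rw [decide_eq_true hj, dif_pos hj]
    cases b
    · exact isFOrId_mpr (if_pos hj) (if_pos hj) _ _ hg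
    · exact isFOrId_mpr (if_pos hj) (if_pos hj) _ _ hh
  · rw [decide_eq_false hj, dif_neg hj]
    exact isFOrId_mpr (if_neg hj) (if_neg hj) _ _ (isFOrId_signId f)

theorem isFOrIdPi_tupMVHom {f : X ⟶ Y} {κ ι : Type} [DecidableEq ι] (α : κ → Bool) (σ : κ → ι)
    (A : ι → B) (i : ι) {e₁ e₂ : Bool → B} {g : e₂ false ⟶ e₁ false} {h : e₁ true ⟶ e₂ true}
    {mkg mkh : Bool}
    (hg : IsFOrId f mkg (toSignHom (s := false) g)) (hh : IsFOrId f mkh (toSignHom (s := true) h)) :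
    IsFOrIdPi f (fun j => decide (σ j = i) && bif α j then mkh else mkg)
      (tupMVHom α σ A i e₁ e₂ g h) :=
  fun j => isFOrId_tupMVHom_body (σ j = i) (α j) (A (σ j)) hg hh

section HexagonLegs

variable {κ ι : Type} [DecidableEq ι] (α : κ → Bool) (σ : κ → ι) (A : ι → B) (i : ι) (f : X ⟶ Y)

theorem isFOrIdPi_tupMVHom_to_Y :
    IsFOrIdPi f (fun j => decide (σ j = i) && α j)
      (tupMVHom α σ A i (fun s => bif s then X else Y) (fun _ => Y) (𝟙 Y) f) := by
  refine IsFOrIdPi.of_mk_eq (isFOrIdPi_tupMVHom α σ A i (mkg := false) (mkh := true) ?_ ?_) ?_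
  exacts [isFOrId_id_op f, isFOrId_hom f, funext fun j => by cases α j <;> rfl]

theorem isFOrIdPi_tupMVHom_to_X :
    IsFOrIdPi f (fun j => decide (σ j = i) && !α j)
      (tupMVHom α σ A i (fun s => bif s then X else Y) (fun _ => X) f (𝟙 X)) := by
  refine IsFOrIdPi.of_mk_eq (isFOrIdPi_tupMVHom α σ A i (mkg := true) (mkh := false) ?_ ?_) ?_
  exacts [isFOrId_hom_op f, isFOrId_id f, funext fun j => by cases α j <;> rfl]

theorem isFOrIdPi_tupMVHom_of_Y :
    IsFOrIdPi f (fun j => decide (σ j = i) && !α j)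
      (tupMVHom α σ A i (fun _ => Y) (fun s => bif s then Y else X) f (𝟙 Y)) := by
  refine IsFOrIdPi.of_mk_eq (isFOrIdPi_tupMVHom α σ A i (mkg := true) (mkh := false) ?_ ?_) ?_
  exacts [isFOrId_hom_op f, isFOrId_id f, funext fun j => by cases α j <;> rfl]

theorem isFOrIdPi_tupMVHom_of_X :
    IsFOrIdPi f (fun j => decide (σ j = i) && α j)
      (tupMVHom α σ A i (fun _ => X) (fun s => bif s then Y else X) (𝟙 X) f) := by
  refine IsFOrIdPi.of_mk_eq (isFOrIdPi_tupMVHom α σ A i (mkg := false) (mkh := true) ?_ ?_) ?_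
  exacts [isFOrId_id_op f, isFOrId_hom f, funext fun j => by cases α j <;> rfl]

end HexagonLegs

variable {wa wb wc n m : ℕ} {α : Fin wa → Bool} {β : Fin wb → Bool} {γ : Fin wc → Bool}
  {σ₁ : Fin wa → Fin n} {τ₁ : Fin wb → Fin n} {σ₂ : Fin wb → Fin m} {τ₂ : Fin wc → Fin m}
  {M : CGP wa wb wc → ℕ} {L : CGT n m → Bool}

theorem isFOrIdPi_mor1 (hLM : IsLabelledMarking α β γ σ₁ τ₁ σ₂ τ₂ X Y M L) (f : X ⟶ Y) :
    IsFOrIdPi f (fun j => decide (M (.inl j) = 1)) (mor1 α β γ σ₁ τ₁ σ₂ τ₂ hLM f) := fun j =>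
  isFOrId_mor1_body f (α j) (M (.inl j)) (L (.inl (σ₁ j)))
    (fun hM hα => hLM.in_label _ _ hM (by simp [cgIn, hα]))
    (fun hM hα => hLM.out_label _ _ hM (by simp [cgOut, hα]))

theorem isFOrIdPi_mor2 (hLM : IsLabelledMarking α β γ σ₁ τ₁ σ₂ τ₂ X Y M L) (f : X ⟶ Y) :
    IsFOrIdPi f (fun j => decide (M (.inr (.inl j)) = 1))
      (mor2 α β γ σ₁ τ₁ σ₂ τ₂ hLM f) := fun j =>
  isFOrId_mor2_body f (β j) (M (.inr (.inl j))) (L (.inl (τ₁ j))) (L (.inr (σ₂ j)))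
    (fun hM hβ => hLM.in_label _ _ hM (by simp [cgIn, hβ]))
    (fun hM hβ => hLM.out_label _ _ hM (by simp [cgOut, hβ]))
    (fun hM hβ => hLM.in_label _ _ hM (by simp [cgIn, hβ]))
    (fun hM hβ => hLM.out_label _ _ hM (by simp [cgOut, hβ]))
    (hLM.le_one _)
    (fun hM hβ => hLM.eq_label _ _ _ hM (by simp [cgIn, hβ]) (by simp [cgOut, hβ]))
    (fun hM hβ => hLM.eq_label _ _ _ hM (by simp [cgIn, hβ]) (by simp [cgOut, hβ]))

theorem isFOrIdPi_mor3 (hLM : IsLabelledMarking α β γ σ₁ τ₁ σ₂ τ₂ X Y M L) (f : X ⟶ Y) :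
    IsFOrIdPi f (fun j => decide (M (.inr (.inr j)) = 1))
      (mor3 α β γ σ₁ τ₁ σ₂ τ₂ hLM f) := fun j =>
  isFOrId_mor3_body f (γ j) (M (.inr (.inr j))) (L (.inr (τ₂ j)))
    (fun hM hγ => hLM.out_label _ _ hM (by simp [cgOut, hγ]))
    (fun hM hγ => hLM.in_label _ _ hM (by simp [cgIn, hγ]))

end Components

section Relabel

variable {B : Type u} {X Y : B} {n m : ℕ} {L : CGT n m → Bool}

theorem upd_eq_self {ι : Type} [DecidableEq ι] {A : ι → B} {i : ι} (h : A i = X) :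
    upd A i X = A := by
  funext k
  by_cases hk : k = i
  · subst hk; simp [h]
  · simp [hk]

theorem L1_update_inl (t : Fin n) (b : Bool) :
    L1 X Y (Function.update L (.inl t) b) = upd (L1 X Y L) t (Lob X Y b) := by
  funext k
  by_cases hk : k = t
  · subst hk; simp [L1]
  · simp [L1, upd, hk]

theorem L2_update_inr (t : Fin m) (b : Bool) :
    L2 X Y (Function.update L (.inr t) b) = upd (L2 X Y L) t (Lob X Y b) := by
  funext k
  by_cases hk : k = t
  · subst hk; simp [L2]
  · simp [L2, upd, hk]

theorem L2_update_inl (t : Fin n) (b : Bool) :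
    L2 X Y (Function.update L (.inl t) b) = L2 X Y L := by
  funext k; simp [L2]

theorem L1_update_inr (t : Fin m) (b : Bool) :
    L1 X Y (Function.update L (.inr t) b) = L1 X Y L := by
  funext k; simp [L1]

end Relabel

section PlaceConditions

variable {B : Type u} {X Y : B}
  {wa wb wc n m : ℕ} {α : Fin wa → Bool} {β : Fin wb → Bool} {γ : Fin wc → Bool}
  {σ₁ : Fin wa → Fin n} {τ₁ : Fin wb → Fin n} {σ₂ : Fin wb → Fin m} {τ₂ : Fin wc → Fin m}
  {M : CGP wa wb wc → ℕ} {L : CGT n m → Bool}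

namespace IsLabelledMarking

variable (hLM : IsLabelledMarking α β γ σ₁ τ₁ σ₂ τ₂ X Y M L)
include hLM

theorem fOrIdCond_inl (j : Fin wa) :
    FOrIdCond X Y (α j) (decide (M (.inl j) = 1))
      (if M (.inl j) = 1 then (bif α j then X else Y) else Lob X Y (L (.inl (σ₁ j))))
      (Lob X Y (L (.inl (σ₁ j)))) := by
  by_cases hM : M (.inl j) = 1
  · cases hα : α j
    · simp [FOrIdCond, hM, Lob, hLM.in_label (.inl j) (.inl (σ₁ j)) hM (by simp [cgIn, hα])]
    · simp [FOrIdCond, hM, Lob, hLM.out_label (.inl j) (.inl (σ₁ j)) hM (by simp [cgOut, hα])]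
  · cases α j <;> simp [FOrIdCond, hM]

theorem fOrIdCond_inr_inl (j : Fin wb) :
    FOrIdCond X Y (β j) (decide (M (.inr (.inl j)) = 1))
      (Lob X Y (L (.inl (τ₁ j)))) (Lob X Y (L (.inr (σ₂ j)))) := by
  rcases hLM.eq_zero_or_one (.inr (.inl j)) with hM | hM
  · cases hβ : β j
    · simp [FOrIdCond, hM, hLM.eq_label (.inr (.inl j)) (.inr (σ₂ j)) (.inl (τ₁ j)) hM
        (by simp [cgIn, hβ]) (by simp [cgOut, hβ])]
    · simp [FOrIdCond, hM, hLM.eq_label (.inr (.inl j)) (.inl (τ₁ j)) (.inr (σ₂ j)) hM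
        (by simp [cgIn, hβ]) (by simp [cgOut, hβ])]
  · cases hβ : β j
    · simp [FOrIdCond, hM, Lob,
        hLM.in_label (.inr (.inl j)) (.inr (σ₂ j)) hM (by simp [cgIn, hβ]),
        hLM.out_label (.inr (.inl j)) (.inl (τ₁ j)) hM (by simp [cgOut, hβ])]
    · simp [FOrIdCond, hM, Lob,
        hLM.in_label (.inr (.inl j)) (.inl (τ₁ j)) hM (by simp [cgIn, hβ]),
        hLM.out_label (.inr (.inl j)) (.inr (σ₂ j)) hM (by simp [cgOut, hβ])]

theorem fOrIdCond_inr_inr (j : Fin wc) :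
    FOrIdCond X Y (γ j) (decide (M (.inr (.inr j)) = 1)) (Lob X Y (L (.inr (τ₂ j))))
      (if M (.inr (.inr j)) = 1 then (bif γ j then Y else X) else Lob X Y (L (.inr (τ₂ j)))) := by
  by_cases hM : M (.inr (.inr j)) = 1
  · cases hγ : γ j
    · simp [FOrIdCond, hM, Lob,
        hLM.out_label (.inr (.inr j)) (.inr (τ₂ j)) hM (by simp [cgOut, hγ])]
    · simp [FOrIdCond, hM, Lob,
        hLM.in_label (.inr (.inr j)) (.inr (τ₂ j)) hM (by simp [cgIn, hγ])]
  · cases γ j <;> simp [FOrIdCond, hM]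

end IsLabelledMarking

end PlaceConditions

section Untouched

variable {B : Type u} [Category.{v} B] {X Y : B}
  {wa wb wc n m : ℕ} {α : Fin wa → Bool} {β : Fin wb → Bool} {γ : Fin wc → Bool}
  {σ₁ : Fin wa → Fin n} {τ₁ : Fin wb → Fin n} {σ₂ : Fin wb → Fin m} {τ₂ : Fin wc → Fin m}
  {M : CGP wa wb wc → ℕ} {L : CGT n m → Bool}

theorem endT_fire_inl (t : Fin n) (b : Bool) :
    endT γ τ₂ (cgFire α β γ σ₁ τ₁ σ₂ τ₂ M (.inl t)) (Function.update L (.inl t) b) X Y =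
      endT γ τ₂ M L X Y := by
  funext j
  refine congrArg (toSign (γ j)) ?_
  cases hγ : γ j <;> simp [hγ, cgFire_of_not_adj, cgIn, cgOut]

theorem startT_fire_inr (t : Fin m) (b : Bool) :
    startT α σ₁ (cgFire α β γ σ₁ τ₁ σ₂ τ₂ M (.inr t)) (Function.update L (.inr t) b) X Y =
      startT α σ₁ M L X Y := by
  funext j
  refine congrArg (toSign (α j)) ?_
  cases hα : α j <;> simp [hα, cgFire_of_not_adj, cgIn, cgOut]

theorem mor3_fire_inl {t : Fin n} {b : Bool} (hLM : IsLabelledMarking α β γ σ₁ τ₁ σ₂ τ₂ X Y M L)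
    (hLM' : IsLabelledMarking α β γ σ₁ τ₁ σ₂ τ₂ X Y (cgFire α β γ σ₁ τ₁ σ₂ τ₂ M (.inl t))
      (Function.update L (.inl t) b)) (f : X ⟶ Y)
    (e₁ : tup γ τ₂ (L2 X Y (Function.update L (.inl t) b)) = tup γ τ₂ (L2 X Y L))
    (e₂ : endT γ τ₂ M L X Y = endT γ τ₂ (cgFire α β γ σ₁ τ₁ σ₂ τ₂ M (.inl t))
      (Function.update L (.inl t) b) X Y) :
    mor3 α β γ σ₁ τ₁ σ₂ τ₂ hLM' f = eqToHom e₁ ≫ mor3 α β γ σ₁ τ₁ σ₂ τ₂ hLM f ≫ eqToHom e₂ := by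
  refine (isFOrIdPi_mor3 hLM' f).unique <| IsFOrIdPi.of_mk_eq ((isFOrIdPi_eqToHom f e₁).comp
    ((isFOrIdPi_mor3 hLM f).comp (isFOrIdPi_eqToHom f e₂) fun _ => Or.inr rfl)
    fun _ => Or.inl rfl) ?_
  funext j
  cases hγ : γ j <;> simp [hγ, cgFire_of_not_adj, cgIn, cgOut]

theorem mor1_fire_inr {t : Fin m} {b : Bool} (hLM : IsLabelledMarking α β γ σ₁ τ₁ σ₂ τ₂ X Y M L)
    (hLM' : IsLabelledMarking α β γ σ₁ τ₁ σ₂ τ₂ X Y (cgFire α β γ σ₁ τ₁ σ₂ τ₂ M (.inr t))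
      (Function.update L (.inr t) b)) (f : X ⟶ Y)
    (e₁ : startT α σ₁ (cgFire α β γ σ₁ τ₁ σ₂ τ₂ M (.inr t)) (Function.update L (.inr t) b) X Y =
      startT α σ₁ M L X Y)
    (e₂ : tup α σ₁ (L1 X Y L) = tup α σ₁ (L1 X Y (Function.update L (.inr t) b))) :
    mor1 α β γ σ₁ τ₁ σ₂ τ₂ hLM' f = eqToHom e₁ ≫ mor1 α β γ σ₁ τ₁ σ₂ τ₂ hLM f ≫ eqToHom e₂ := by
  refine (isFOrIdPi_mor1 hLM' f).unique <| IsFOrIdPi.of_mk_eq ((isFOrIdPi_eqToHom f e₁).comp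
    ((isFOrIdPi_mor1 hLM f).comp (isFOrIdPi_eqToHom f e₂) fun _ => Or.inr rfl)
    fun _ => Or.inl rfl) ?_
  funext j
  cases hα : α j <;> simp [hα, cgFire_of_not_adj, cgIn, cgOut]

end Untouched

section FireInl

variable {B : Type u} [Category.{v} B] {X Y : B} {f : X ⟶ Y}
  {wa wb wc n m : ℕ} {α : Fin wa → Bool} {β : Fin wb → Bool} {γ : Fin wc → Bool}
  {σ₁ : Fin wa → Fin n} {τ₁ : Fin wb → Fin n} {σ₂ : Fin wb → Fin m} {τ₂ : Fin wc → Fin m}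
  {M : CGP wa wb wc → ℕ} {L : CGT n m → Bool} {t₀ : Fin n}
  (hLM : IsLabelledMarking α β γ σ₁ τ₁ σ₂ τ₂ X Y M L)
  (hen : cgEnabled α β γ σ₁ τ₁ σ₂ τ₂ M (.inl t₀)) (hLt : L (.inl t₀) = true)
include hLM hen hLt

theorem startT_fire_inl :
    startT α σ₁ M L X Y = startT α σ₁ (cgFire α β γ σ₁ τ₁ σ₂ τ₂ M (.inl t₀))
      (Function.update L (.inl t₀) false) X Y := by
  funext j
  refine congrArg (toSign (α j)) ?_
  by_cases hσ : σ₁ j = t₀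
  · cases hα : α j <;>
      simp [hσ, hα, hLt, Lob, hLM.eq_one_iff hen hLt, hLM.fire_eq_one_iff hen hLt, cgIn, cgOut]
  · cases hα : α j <;> simp [hσ, hα, cgFire_of_not_adj, cgIn, cgOut]

theorem exists_isFOrIdPi_startT_inl (f : X ⟶ Y) :
    ∃ c : startT α σ₁ M L X Y ⟶ tupMV α σ₁ (L1 X Y L) t₀ (fun s => bif s then X else Y),
      IsFOrIdPi f (fun j => decide (M (.inl j) = 1) && !decide (σ₁ j = t₀)) c := by
  refine exists_isFOrIdPi f fun j => ?_
  by_cases hσ : σ₁ j = t₀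
  · cases hα : α j <;>
      simp [FOrIdCond, hσ, hα, hLt, Lob, hLM.eq_one_iff hen hLt, cgIn, cgOut]
  simpa [hσ, L1] using hLM.fOrIdCond_inl j

theorem exists_isFOrIdPi_tup_inl (f : X ⟶ Y) :
    ∃ r : tupMV β τ₁ (L1 X Y L) t₀ (fun s => bif s then Y else X) ⟶ tup β σ₂ (L2 X Y L),
      IsFOrIdPi f (fun j => decide (M (.inr (.inl j)) = 1) && !decide (τ₁ j = t₀)) r := by
  refine exists_isFOrIdPi f fun j => ?_
  by_cases hτ : τ₁ j = t₀
  · cases hβ : β j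
    · have hM := hLM.eq_one_of_out hen (p := .inr (.inl j)) (by simp [cgOut, hβ, hτ])
      simp [FOrIdCond, hτ, Lob, L2,
        hLM.in_label (.inr (.inl j)) (.inr (σ₂ j)) hM (by simp [cgIn, hβ])]
    · have hM := hLM.eq_zero_of_in hLt (p := .inr (.inl j)) (by simp [cgIn, hβ, hτ])
      simp [FOrIdCond, hτ, Lob, L2, ← hLM.eq_label (.inr (.inl j)) (.inl (τ₁ j)) (.inr (σ₂ j))
        hM (by simp [cgIn, hβ]) (by simp [cgOut, hβ]), hLt]
  simpa [hτ, L1, L2] using hLM.fOrIdCond_inr_inl j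

theorem mor1_eq_inl
    {c : startT α σ₁ M L X Y ⟶ tupMV α σ₁ (L1 X Y L) t₀ (fun s => bif s then X else Y)}
    (hc : IsFOrIdPi f (fun j => decide (M (.inl j) = 1) && !decide (σ₁ j = t₀)) c)
    (e : tupMV α σ₁ (L1 X Y L) t₀ (fun _ => Y) = tup α σ₁ (L1 X Y L)) :
    mor1 α β γ σ₁ τ₁ σ₂ τ₂ hLM f =
      c ≫ tupMVHom α σ₁ (L1 X Y L) t₀ _ (fun _ => Y) (𝟙 Y) f ≫ eqToHom e := by
  refine (isFOrIdPi_mor1 hLM f).unique <| IsFOrIdPi.of_mk_eq (hc.comp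
    ((isFOrIdPi_tupMVHom_to_Y α σ₁ _ t₀ f).comp
      (isFOrIdPi_eqToHom f e) fun _ => Or.inr rfl) fun j => ?_) ?_
  · by_cases hσ : σ₁ j = t₀ <;> simp [hσ]
  · funext j
    by_cases hσ : σ₁ j = t₀
    · cases hα : α j <;> simp [hσ, hα, hLM.eq_one_iff hen hLt, cgIn, cgOut]
    · simp [hσ]

theorem mor1_fire_inl
    (hLM' : IsLabelledMarking α β γ σ₁ τ₁ σ₂ τ₂ X Y (cgFire α β γ σ₁ τ₁ σ₂ τ₂ M (.inl t₀))
      (Function.update L (.inl t₀) false))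
    {c : startT α σ₁ M L X Y ⟶ tupMV α σ₁ (L1 X Y L) t₀ (fun s => bif s then X else Y)}
    (hc : IsFOrIdPi f (fun j => decide (M (.inl j) = 1) && !decide (σ₁ j = t₀)) c)
    (e₁ : startT α σ₁ (cgFire α β γ σ₁ τ₁ σ₂ τ₂ M (.inl t₀))
      (Function.update L (.inl t₀) false) X Y = startT α σ₁ M L X Y)
    (e₂ : tupMV α σ₁ (L1 X Y L) t₀ (fun _ => X) =
      tup α σ₁ (L1 X Y (Function.update L (.inl t₀) false))) :
    mor1 α β γ σ₁ τ₁ σ₂ τ₂ hLM' f =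
      eqToHom e₁ ≫ c ≫ tupMVHom α σ₁ (L1 X Y L) t₀ _ (fun _ => X) f (𝟙 X) ≫ eqToHom e₂ := by
  refine (isFOrIdPi_mor1 hLM' f).unique <| IsFOrIdPi.of_mk_eq ((isFOrIdPi_eqToHom f e₁).comp
    (hc.comp ((isFOrIdPi_tupMVHom_to_X α σ₁ _ t₀ f).comp (isFOrIdPi_eqToHom f e₂)
      fun _ => Or.inr rfl) fun j => ?_) fun _ => Or.inl rfl) ?_
  · by_cases hσ : σ₁ j = t₀ <;> simp [hσ]
  · funext j
    by_cases hσ : σ₁ j = t₀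
    · cases hα : α j <;> simp [hσ, hα, hLM.fire_eq_one_iff hen hLt, cgIn, cgOut]
    · cases hα : α j <;> simp [hσ, hα, cgFire_of_not_adj, cgIn, cgOut]

theorem mor2_eq_inl
    {r : tupMV β τ₁ (L1 X Y L) t₀ (fun s => bif s then Y else X) ⟶ tup β σ₂ (L2 X Y L)}
    (hr : IsFOrIdPi f (fun j => decide (M (.inr (.inl j)) = 1) && !decide (τ₁ j = t₀)) r)
    (e : tup β τ₁ (L1 X Y L) = tupMV β τ₁ (L1 X Y L) t₀ (fun _ => Y)) :
    mor2 α β γ σ₁ τ₁ σ₂ τ₂ hLM f =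
      eqToHom e ≫ tupMVHom β τ₁ (L1 X Y L) t₀ (fun _ => Y) _ f (𝟙 Y) ≫ r := by
  refine (isFOrIdPi_mor2 hLM f).unique <| IsFOrIdPi.of_mk_eq ((isFOrIdPi_eqToHom f e).comp
    ((isFOrIdPi_tupMVHom_of_Y β τ₁ _ t₀ f).comp hr fun j => ?_) fun _ => Or.inl rfl) ?_
  · by_cases hτ : τ₁ j = t₀ <;> simp [hτ]
  · funext j
    by_cases hτ : τ₁ j = t₀
    · cases hβ : β j <;> simp [hτ, hβ, hLM.eq_one_iff hen hLt, cgIn, cgOut]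
    · simp [hτ]

theorem mor2_fire_inl
    (hLM' : IsLabelledMarking α β γ σ₁ τ₁ σ₂ τ₂ X Y (cgFire α β γ σ₁ τ₁ σ₂ τ₂ M (.inl t₀))
      (Function.update L (.inl t₀) false))
    {r : tupMV β τ₁ (L1 X Y L) t₀ (fun s => bif s then Y else X) ⟶ tup β σ₂ (L2 X Y L)}
    (hr : IsFOrIdPi f (fun j => decide (M (.inr (.inl j)) = 1) && !decide (τ₁ j = t₀)) r)
    (e₁ : tup β τ₁ (L1 X Y (Function.update L (.inl t₀) false)) =
      tupMV β τ₁ (L1 X Y L) t₀ (fun _ => X))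
    (e₂ : tup β σ₂ (L2 X Y L) = tup β σ₂ (L2 X Y (Function.update L (.inl t₀) false))) :
    mor2 α β γ σ₁ τ₁ σ₂ τ₂ hLM' f =
      eqToHom e₁ ≫ tupMVHom β τ₁ (L1 X Y L) t₀ (fun _ => X) _ (𝟙 X) f ≫ r ≫ eqToHom e₂ := by
  refine (isFOrIdPi_mor2 hLM' f).unique <| IsFOrIdPi.of_mk_eq ((isFOrIdPi_eqToHom f e₁).comp
    ((isFOrIdPi_tupMVHom_of_X β τ₁ _ t₀ f).comp (hr.comp (isFOrIdPi_eqToHom f e₂)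
      fun _ => Or.inr rfl) fun j => ?_) fun _ => Or.inl rfl) ?_
  · by_cases hτ : τ₁ j = t₀ <;> simp [hτ]
  · funext j
    by_cases hτ : τ₁ j = t₀
    · cases hβ : β j <;> simp [hτ, hβ, hLM.fire_eq_one_iff hen hLt, cgIn, cgOut]
    · cases hβ : β j <;> simp [hτ, hβ, cgFire_of_not_adj, cgIn, cgOut]

end FireInl

section FireInr

variable {B : Type u} [Category.{v} B] {X Y : B} {f : X ⟶ Y}
  {wa wb wc n m : ℕ} {α : Fin wa → Bool} {β : Fin wb → Bool} {γ : Fin wc → Bool}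
  {σ₁ : Fin wa → Fin n} {τ₁ : Fin wb → Fin n} {σ₂ : Fin wb → Fin m} {τ₂ : Fin wc → Fin m}
  {M : CGP wa wb wc → ℕ} {L : CGT n m → Bool} {t₁ : Fin m}
  (hLM : IsLabelledMarking α β γ σ₁ τ₁ σ₂ τ₂ X Y M L)
  (hen : cgEnabled α β γ σ₁ τ₁ σ₂ τ₂ M (.inr t₁)) (hLt : L (.inr t₁) = true)
include hLM hen hLt

theorem endT_fire_inr :
    endT γ τ₂ M L X Y = endT γ τ₂ (cgFire α β γ σ₁ τ₁ σ₂ τ₂ M (.inr t₁))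
      (Function.update L (.inr t₁) false) X Y := by
  funext j
  refine congrArg (toSign (γ j)) ?_
  by_cases hτ : τ₂ j = t₁
  · cases hγ : γ j <;>
      simp [hτ, hγ, hLt, Lob, hLM.eq_one_iff hen hLt, hLM.fire_eq_one_iff hen hLt, cgIn, cgOut]
  · cases hγ : γ j <;> simp [hτ, hγ, cgFire_of_not_adj, cgIn, cgOut]

theorem exists_isFOrIdPi_tup_inr (f : X ⟶ Y) :
    ∃ c : tup β τ₁ (L1 X Y L) ⟶ tupMV β σ₂ (L2 X Y L) t₁ (fun s => bif s then X else Y),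
      IsFOrIdPi f (fun j => decide (M (.inr (.inl j)) = 1) && !decide (σ₂ j = t₁)) c := by
  refine exists_isFOrIdPi f fun j => ?_
  by_cases hσ : σ₂ j = t₁
  · cases hβ : β j
    · have hM := hLM.eq_zero_of_in hLt (p := .inr (.inl j)) (by simp [cgIn, hβ, hσ])
      simp [FOrIdCond, hσ, Lob, L1, ← hLM.eq_label (.inr (.inl j)) (.inr (σ₂ j)) (.inl (τ₁ j))
        hM (by simp [cgIn, hβ]) (by simp [cgOut, hβ]), hLt]
    · have hM := hLM.eq_one_of_out hen (p := .inr (.inl j)) (by simp [cgOut, hβ, hσ])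
      simp [FOrIdCond, hσ, Lob, L1,
        hLM.in_label (.inr (.inl j)) (.inl (τ₁ j)) hM (by simp [cgIn, hβ])]
  simpa [hσ, L1, L2] using hLM.fOrIdCond_inr_inl j

theorem exists_isFOrIdPi_endT_inr (f : X ⟶ Y) :
    ∃ r : tupMV γ τ₂ (L2 X Y L) t₁ (fun s => bif s then Y else X) ⟶ endT γ τ₂ M L X Y,
      IsFOrIdPi f (fun j => decide (M (.inr (.inr j)) = 1) && !decide (τ₂ j = t₁)) r := by
  refine exists_isFOrIdPi f fun j => ?_
  by_cases hτ : τ₂ j = t₁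
  · cases hγ : γ j <;>
      simp [FOrIdCond, hτ, hγ, hLt, Lob, hLM.eq_one_iff hen hLt, cgIn, cgOut]
  simpa [hτ, L2] using hLM.fOrIdCond_inr_inr j

theorem mor2_eq_inr
    {c : tup β τ₁ (L1 X Y L) ⟶ tupMV β σ₂ (L2 X Y L) t₁ (fun s => bif s then X else Y)}
    (hc : IsFOrIdPi f (fun j => decide (M (.inr (.inl j)) = 1) && !decide (σ₂ j = t₁)) c)
    (e : tupMV β σ₂ (L2 X Y L) t₁ (fun _ => Y) = tup β σ₂ (L2 X Y L)) :
    mor2 α β γ σ₁ τ₁ σ₂ τ₂ hLM f =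
      c ≫ tupMVHom β σ₂ (L2 X Y L) t₁ _ (fun _ => Y) (𝟙 Y) f ≫ eqToHom e := by
  refine (isFOrIdPi_mor2 hLM f).unique <| IsFOrIdPi.of_mk_eq (hc.comp
    ((isFOrIdPi_tupMVHom_to_Y β σ₂ _ t₁ f).comp
      (isFOrIdPi_eqToHom f e) fun _ => Or.inr rfl) fun j => ?_) ?_
  · by_cases hσ : σ₂ j = t₁ <;> simp [hσ]
  · funext j
    by_cases hσ : σ₂ j = t₁
    · cases hβ : β j <;> simp [hσ, hβ, hLM.eq_one_iff hen hLt, cgIn, cgOut]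
    · simp [hσ]

theorem mor2_fire_inr
    (hLM' : IsLabelledMarking α β γ σ₁ τ₁ σ₂ τ₂ X Y (cgFire α β γ σ₁ τ₁ σ₂ τ₂ M (.inr t₁))
      (Function.update L (.inr t₁) false))
    {c : tup β τ₁ (L1 X Y L) ⟶ tupMV β σ₂ (L2 X Y L) t₁ (fun s => bif s then X else Y)}
    (hc : IsFOrIdPi f (fun j => decide (M (.inr (.inl j)) = 1) && !decide (σ₂ j = t₁)) c)
    (e₁ : tup β τ₁ (L1 X Y (Function.update L (.inr t₁) false)) = tup β τ₁ (L1 X Y L))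
    (e₂ : tupMV β σ₂ (L2 X Y L) t₁ (fun _ => X) =
      tup β σ₂ (L2 X Y (Function.update L (.inr t₁) false))) :
    mor2 α β γ σ₁ τ₁ σ₂ τ₂ hLM' f =
      eqToHom e₁ ≫ c ≫ tupMVHom β σ₂ (L2 X Y L) t₁ _ (fun _ => X) f (𝟙 X) ≫ eqToHom e₂ := by
  refine (isFOrIdPi_mor2 hLM' f).unique <| IsFOrIdPi.of_mk_eq ((isFOrIdPi_eqToHom f e₁).comp
    (hc.comp ((isFOrIdPi_tupMVHom_to_X β σ₂ _ t₁ f).comp (isFOrIdPi_eqToHom f e₂)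
      fun _ => Or.inr rfl) fun j => ?_) fun _ => Or.inl rfl) ?_
  · by_cases hσ : σ₂ j = t₁ <;> simp [hσ]
  · funext j
    by_cases hσ : σ₂ j = t₁
    · cases hβ : β j <;> simp [hσ, hβ, hLM.fire_eq_one_iff hen hLt, cgIn, cgOut]
    · cases hβ : β j <;> simp [hσ, hβ, cgFire_of_not_adj, cgIn, cgOut]

theorem mor3_eq_inr
    {r : tupMV γ τ₂ (L2 X Y L) t₁ (fun s => bif s then Y else X) ⟶ endT γ τ₂ M L X Y}
    (hr : IsFOrIdPi f (fun j => decide (M (.inr (.inr j)) = 1) && !decide (τ₂ j = t₁)) r)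
    (e : tup γ τ₂ (L2 X Y L) = tupMV γ τ₂ (L2 X Y L) t₁ (fun _ => Y)) :
    mor3 α β γ σ₁ τ₁ σ₂ τ₂ hLM f =
      eqToHom e ≫ tupMVHom γ τ₂ (L2 X Y L) t₁ (fun _ => Y) _ f (𝟙 Y) ≫ r := by
  refine (isFOrIdPi_mor3 hLM f).unique <| IsFOrIdPi.of_mk_eq ((isFOrIdPi_eqToHom f e).comp
    ((isFOrIdPi_tupMVHom_of_Y γ τ₂ _ t₁ f).comp hr fun j => ?_) fun _ => Or.inl rfl) ?_
  · by_cases hτ : τ₂ j = t₁ <;> simp [hτ]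
  · funext j
    by_cases hτ : τ₂ j = t₁
    · cases hγ : γ j <;> simp [hτ, hγ, hLM.eq_one_iff hen hLt, cgIn, cgOut]
    · simp [hτ]

theorem mor3_fire_inr
    (hLM' : IsLabelledMarking α β γ σ₁ τ₁ σ₂ τ₂ X Y (cgFire α β γ σ₁ τ₁ σ₂ τ₂ M (.inr t₁))
      (Function.update L (.inr t₁) false))
    {r : tupMV γ τ₂ (L2 X Y L) t₁ (fun s => bif s then Y else X) ⟶ endT γ τ₂ M L X Y}
    (hr : IsFOrIdPi f (fun j => decide (M (.inr (.inr j)) = 1) && !decide (τ₂ j = t₁)) r)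
    (e₁ : tup γ τ₂ (L2 X Y (Function.update L (.inr t₁) false)) =
      tupMV γ τ₂ (L2 X Y L) t₁ (fun _ => X))
    (e₂ : endT γ τ₂ M L X Y = endT γ τ₂ (cgFire α β γ σ₁ τ₁ σ₂ τ₂ M (.inr t₁))
      (Function.update L (.inr t₁) false) X Y) :
    mor3 α β γ σ₁ τ₁ σ₂ τ₂ hLM' f =
      eqToHom e₁ ≫ tupMVHom γ τ₂ (L2 X Y L) t₁ (fun _ => X) _ (𝟙 X) f ≫ r ≫ eqToHom e₂ := by
  refine (isFOrIdPi_mor3 hLM' f).unique <| IsFOrIdPi.of_mk_eq ((isFOrIdPi_eqToHom f e₁).comp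
    ((isFOrIdPi_tupMVHom_of_X γ τ₂ _ t₁ f).comp (hr.comp (isFOrIdPi_eqToHom f e₂)
      fun _ => Or.inr rfl) fun j => ?_) fun _ => Or.inl rfl) ?_
  · by_cases hτ : τ₂ j = t₁ <;> simp [hτ]
  · funext j
    by_cases hτ : τ₂ j = t₁
    · cases hγ : γ j <;> simp [hτ, hγ, hLM.fire_eq_one_iff hen hLt, cgIn, cgOut]
    · cases hγ : γ j <;> simp [hτ, hγ, cgFire_of_not_adj, cgIn, cgOut]

end FireInr

section Dinaturality

variable {B : Type u} [Category.{v} B] {C : Type u'} [Category.{v'} C] {κa κb ι : Type}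
  {α : κa → Bool} {β : κb → Bool} {F : PowCat B α ⥤ C} {G : PowCat B β ⥤ C}
  {σ : κa → ι} {τ : κb → ι} {X Y : B}

theorem Transf.app_eq_of_eq (φ : Transf α β F G σ τ) {A A' : ι → B} (h : A = A') :
    φ A' = eqToHom (by rw [h]) ≫ φ A ≫ eqToHom (by rw [h]) := by
  subst h; simp

theorem DinatAt.whisker [DecidableEq ι] {φ : Transf α β F G σ τ} {i : ι} (hφ : DinatAt φ i)
    (f : X ⟶ Y)
    {A A' : ι → B} (hY : upd A i Y = A) (hX : upd A i X = A') {S : PowCat B α} {T : PowCat B β}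
    (c : S ⟶ tupMV α σ A i (fun s => bif s then X else Y))
    (r : tupMV β τ A i (fun s => bif s then Y else X) ⟶ T) :
    F.map (c ≫ tupMVHom α σ A i _ (fun _ => Y) (𝟙 Y) f ≫ eqToHom (congrArg (tup α σ) hY)) ≫
        φ A ≫ G.map (eqToHom (congrArg (tup β τ) hY).symm ≫
          tupMVHom β τ A i (fun _ => Y) _ f (𝟙 Y) ≫ r) =
      F.map (c ≫ tupMVHom α σ A i _ (fun _ => X) f (𝟙 X) ≫ eqToHom (congrArg (tup α σ) hX)) ≫
        φ A' ≫ G.map (eqToHom (congrArg (tup β τ) hX).symm ≫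
          tupMVHom β τ A i (fun _ => X) _ (𝟙 X) f ≫ r) := by
  subst hX
  rw [φ.app_eq_of_eq hY]
  simp only [Functor.map_comp, eqToHom_map, Category.assoc, eqToHom_trans_assoc, eqToHom_refl,
    Category.id_comp]
  rw [← reassoc_of% (hφ A f), CategoryTheory.Functor.map_id, Category.id_comp]

section Steps

variable {B : Type u} [Category.{v} B] {C : Type u'} [Category.{v'} C] {X Y : B}
  {wa wb wc n m : ℕ} {α : Fin wa → Bool} {β : Fin wb → Bool} {γ : Fin wc → Bool}
  {σ₁ : Fin wa → Fin n} {τ₁ : Fin wb → Fin n} {σ₂ : Fin wb → Fin m} {τ₂ : Fin wc → Fin m}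
  {M : CGP wa wb wc → ℕ} {L : CGT n m → Bool}
  {F₁ : PowCat B α ⥤ C} {F₂ : PowCat B β ⥤ C} {F₃ : PowCat B γ ⥤ C}
  (φ : Transf α β F₁ F₂ σ₁ τ₁) (ψ : Transf β γ F₂ F₃ σ₂ τ₂)

theorem interp_fire_inl {t₀ : Fin n} (hφ : DinatAt φ t₀)
    (hLM : IsLabelledMarking α β γ σ₁ τ₁ σ₂ τ₂ X Y M L)
    (hen : cgEnabled α β γ σ₁ τ₁ σ₂ τ₂ M (.inl t₀)) (hLt : L (.inl t₀) = true) (f : X ⟶ Y)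
    (hLM' : IsLabelledMarking α β γ σ₁ τ₁ σ₂ τ₂ X Y (cgFire α β γ σ₁ τ₁ σ₂ τ₂ M (.inl t₀))
      (Function.update L (.inl t₀) false)) :
    interp α β γ σ₁ τ₁ σ₂ τ₂ φ ψ M L hLM f =
      eqToHom (congrArg F₁.obj (startT_fire_inl hLM hen hLt)) ≫
        interp α β γ σ₁ τ₁ σ₂ τ₂ φ ψ _ _ hLM' f ≫
        eqToHom (congrArg F₃.obj (endT_fire_inl t₀ false)) := by
  obtain ⟨c, hc⟩ := exists_isFOrIdPi_startT_inl hLM hen hLt f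
  obtain ⟨r, hr⟩ := exists_isFOrIdPi_tup_inl hLM hen hLt f
  have hY : upd (L1 X Y L) t₀ Y = L1 X Y L := upd_eq_self (by simp [L1, hLt, Lob])
  have hX : upd (L1 X Y L) t₀ X = L1 X Y (Function.update L (.inl t₀) false) :=
    (L1_update_inl t₀ false).symm
  have h₂ : L2 X Y (Function.update L (.inl t₀) false) = L2 X Y L := L2_update_inl t₀ false
  unfold interp
  rw [mor1_eq_inl hLM hen hLt hc (congrArg (tup α σ₁) hY),
    mor2_eq_inl hLM hen hLt hr (congrArg (tup β τ₁) hY).symm,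
    reassoc_of% (hφ.whisker f hY hX c r),
    mor1_fire_inl hLM hen hLt hLM' hc (startT_fire_inl hLM hen hLt).symm
      (congrArg (tup α σ₁) hX),
    mor2_fire_inl hLM hen hLt hLM' hr (congrArg (tup β τ₁) hX).symm
      (congrArg (tup β σ₂) h₂).symm,
    mor3_fire_inl hLM hLM' f (congrArg (tup γ τ₂) h₂) (endT_fire_inl t₀ false).symm,
    ψ.app_eq_of_eq h₂.symm]
  simp only [Functor.map_comp, eqToHom_map, Category.assoc, eqToHom_trans_assoc, eqToHom_refl,
    Category.id_comp, Category.comp_id, eqToHom_trans]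

theorem interp_fire_inr {t₁ : Fin m} (hψ : DinatAt ψ t₁)
    (hLM : IsLabelledMarking α β γ σ₁ τ₁ σ₂ τ₂ X Y M L)
    (hen : cgEnabled α β γ σ₁ τ₁ σ₂ τ₂ M (.inr t₁)) (hLt : L (.inr t₁) = true) (f : X ⟶ Y)
    (hLM' : IsLabelledMarking α β γ σ₁ τ₁ σ₂ τ₂ X Y (cgFire α β γ σ₁ τ₁ σ₂ τ₂ M (.inr t₁))
      (Function.update L (.inr t₁) false)) :
    interp α β γ σ₁ τ₁ σ₂ τ₂ φ ψ M L hLM f =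
      eqToHom (congrArg F₁.obj (startT_fire_inr t₁ false).symm) ≫
        interp α β γ σ₁ τ₁ σ₂ τ₂ φ ψ _ _ hLM' f ≫
        eqToHom (congrArg F₃.obj (endT_fire_inr hLM hen hLt).symm) := by
  obtain ⟨c, hc⟩ := exists_isFOrIdPi_tup_inr hLM hen hLt f
  obtain ⟨r, hr⟩ := exists_isFOrIdPi_endT_inr hLM hen hLt f
  have hY : upd (L2 X Y L) t₁ Y = L2 X Y L := upd_eq_self (by simp [L2, hLt, Lob])
  have hX : upd (L2 X Y L) t₁ X = L2 X Y (Function.update L (.inr t₁) false) :=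
    (L2_update_inr t₁ false).symm
  have h₁ : L1 X Y (Function.update L (.inr t₁) false) = L1 X Y L := L1_update_inr t₁ false
  unfold interp
  rw [mor2_eq_inr hLM hen hLt hc (congrArg (tup β σ₂) hY),
    mor3_eq_inr hLM hen hLt hr (congrArg (tup γ τ₂) hY).symm,
    hψ.whisker f hY hX c r,
    mor1_fire_inr hLM hLM' f (startT_fire_inr t₁ false) (congrArg (tup α σ₁) h₁).symm,
    mor2_fire_inr hLM hen hLt hLM' hc (congrArg (tup β τ₁) h₁)
      (congrArg (tup β σ₂) hX),
    mor3_fire_inr hLM hen hLt hLM' hr (congrArg (tup γ τ₂) hX).symm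
      (endT_fire_inr hLM hen hLt),
    φ.app_eq_of_eq h₁.symm]
  simp only [Functor.map_comp, eqToHom_map, Category.assoc, eqToHom_trans_assoc, eqToHom_refl,
    Category.id_comp, Category.comp_id, eqToHom_trans]

theorem interp_fire (hφ : ∀ x, DinatAt φ x) (hψ : ∀ x, DinatAt ψ x)
    (hLM : IsLabelledMarking α β γ σ₁ τ₁ σ₂ τ₂ X Y M L) {t : CGT n m}
    (hen : cgEnabled α β γ σ₁ τ₁ σ₂ τ₂ M t) (hLt : L t = true) (f : X ⟶ Y) :
    ∃ (hLM' : IsLabelledMarking α β γ σ₁ τ₁ σ₂ τ₂ X Y (cgFire α β γ σ₁ τ₁ σ₂ τ₂ M t)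
        (Function.update L t false))
      (e₁ : startT α σ₁ M L X Y =
        startT α σ₁ (cgFire α β γ σ₁ τ₁ σ₂ τ₂ M t) (Function.update L t false) X Y)
      (e₂ : endT γ τ₂ M L X Y =
        endT γ τ₂ (cgFire α β γ σ₁ τ₁ σ₂ τ₂ M t) (Function.update L t false) X Y),
      interp α β γ σ₁ τ₁ σ₂ τ₂ φ ψ M L hLM f =
        eqToHom (congrArg F₁.obj e₁) ≫ interp α β γ σ₁ τ₁ σ₂ τ₂ φ ψ _ _ hLM' f ≫
          eqToHom (congrArg F₃.obj e₂).symm := by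
  refine ⟨hLM.fire hen hLt, ?_⟩
  cases t with
  | inl t₀ => exact ⟨startT_fire_inl hLM hen hLt, (endT_fire_inl t₀ false).symm,
      interp_fire_inl φ ψ (hφ t₀) hLM hen hLt f _⟩
  | inr t₁ => exact ⟨(startT_fire_inr t₁ false).symm, endT_fire_inr hLM hen hLt,
      interp_fire_inr φ ψ (hψ t₁) hLM hen hLt f _⟩

end Steps

theorem relabel_cons {T : Type*} [DecidableEq T] [BEq T] [LawfulBEq T] (L : T → Bool) (t : T)
    (ts : List T) :
    (fun s => if ts.contains s then false else Function.update L t false s) =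
      fun s => if (t :: ts).contains s then false else L s := by
  funext s
  by_cases hs : s = t
  · subst hs; simp
  · simp [hs]

/-- Let `φ : F₁ → F₂`, `ψ : F₂ → F₃` be transformations dinatural in all
their variables and `f : X ⟶ Y` a morphism.  Let `(M, L, f)` be a labelled marking of the
composite graph `Γ(ψ) ∘ Γ(φ)`, let `M'` be reachable from `M` by successively firing
pairwise distinct transitions `ts`, each labelled `Y` by `L`, and let `L'` agree with `L`
except that it labels every transition of `ts` with `X`.  Then `(M', L', f)` is a
labelled marking and `⟨M, L, f⟩ = ⟨M', L', f⟩` as morphisms of `C`. -/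
theorem labelled_marking_fire_seq
    {B : Type u} [Category.{v} B] {C : Type u'} [Category.{v'} C]
    {wa wb wc n m : ℕ}
    {α : Fin wa → Bool} {β : Fin wb → Bool} {γ : Fin wc → Bool}
    {σ₁ : Fin wa → Fin n} {τ₁ : Fin wb → Fin n}
    {σ₂ : Fin wb → Fin m} {τ₂ : Fin wc → Fin m}
    {F₁ : PowCat B α ⥤ C} {F₂ : PowCat B β ⥤ C} {F₃ : PowCat B γ ⥤ C}
    (φ : Transf α β F₁ F₂ σ₁ τ₁) (ψ : Transf β γ F₂ F₃ σ₂ τ₂)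
    (hφ : ∀ x, DinatAt φ x) (hψ : ∀ x, DinatAt ψ x)
    {X Y : B} (f : X ⟶ Y)
    (M M' : CGP wa wb wc → ℕ) (L : CGT n m → Bool)
    (hLM : IsLabelledMarking α β γ σ₁ τ₁ σ₂ τ₂ X Y M L)
    (ts : List (CGT n m)) (hnd : ts.Nodup) (hlab : ∀ t ∈ ts, L t = true)
    (hseq : CGFireSeq α β γ σ₁ τ₁ σ₂ τ₂ M ts M') :
    ∃ (hLM' : IsLabelledMarking α β γ σ₁ τ₁ σ₂ τ₂ X Y M'
        (fun s : CGT n m => if ts.contains s then false else L s))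
      (e₁ : startT α σ₁ M L X Y =
        startT α σ₁ M' (fun s : CGT n m => if ts.contains s then false else L s) X Y)
      (e₂ : endT γ τ₂ M L X Y =
        endT γ τ₂ M' (fun s : CGT n m => if ts.contains s then false else L s) X Y),
      interp α β γ σ₁ τ₁ σ₂ τ₂ φ ψ M L hLM f =
        eqToHom (congrArg F₁.obj e₁) ≫
          interp α β γ σ₁ τ₁ σ₂ τ₂ φ ψ M'
            (fun s : CGT n m => if ts.contains s then false else L s) hLM' f ≫
          eqToHom (congrArg F₃.obj e₂).symm := by
  induction hseq generalizing L with
  | nil M =>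
    have hL : (fun s => if ([] : List (CGT n m)).contains s then false else L s) = L := by
      funext s; simp
    rw [hL]
    exact ⟨hLM, rfl, rfl, by simp⟩
  | cons t ts hen _ ih =>
    obtain ⟨ht, hnd⟩ := List.nodup_cons.mp hnd
    obtain ⟨hLM₁, e₁, e₂, hstep⟩ := interp_fire φ ψ hφ hψ hLM hen (hlab t List.mem_cons_self) f
    obtain ⟨hLM₂, e₁', e₂', hrest⟩ := ih _ hLM₁ hnd fun s hs => by
      rw [Function.update_of_ne (ne_of_mem_of_not_mem hs ht), hlab s (List.mem_cons_of_mem t hs)]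
    rw [← relabel_cons]
    exact ⟨hLM₂, e₁.trans e₁', e₂.trans e₂', by rw [hstep, hrest]; simp⟩
end Dinaturality
end

section
/- Let A, B, C be categories, F, G : Aᵒᵖ × A ⥤ B and H, K : Bᵒᵖ × B ⥤ C functors, and φ : F → G, ψ : H → K dinatural transformations. Then the horizontal composition ψ ∗ φ is a dinatural transformation from H(Gᵒᵖ, F) to K(Fᵒᵖ, G): for every morphism f : A → B of A, K(F(f, 1_A), G(1_A, f)) ∘ (ψ ∗ φ)_A ∘ H(G(1_A, f), F(f, 1_A)) = K(F(1_B, f), G(f, 1_B)) ∘ (ψ ∗ φ)_B ∘ H(G(f, 1_B), F(1_B, f)), an equality of morphisms H(G(A,B), F(B,A)) → K(F(B,A), G(A,B)). -/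
open CategoryTheory Opposite

universe v₁ u₁ v₂ u₂ v₃ u₃

variable {A : Type u₁} [Category.{v₁} A] {B : Type u₂} [Category.{v₂} B]
  {C : Type u₃} [Category.{v₃} C]

/-- Dinaturality of a family `φ_X : F (X, X) ⟶ G (X, X)`,
for `F G : Aᵒᵖ × A ⥤ B`. -/
def IsDinatural {F G : Aᵒᵖ × A ⥤ B} (φ : ∀ X : A, F.obj (op X, X) ⟶ G.obj (op X, X)) :
    Prop :=
  ∀ {X Y : A} (f : X ⟶ Y),
    F.map ((f.op, 𝟙 X) : (op Y, X) ⟶ (op X, X)) ≫ φ X ≫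
        G.map ((𝟙 (op X), f) : (op X, X) ⟶ (op X, Y)) =
      F.map ((𝟙 (op Y), f) : (op Y, X) ⟶ (op Y, Y)) ≫ φ Y ≫
        G.map ((f.op, 𝟙 Y) : (op Y, Y) ⟶ (op X, Y))

/-- The horizontal composition `ψ ∗ φ` of two (dinatural) families, defined as
`K(1, φ_X) ∘ ψ_{F(X,X)} ∘ H(φ_X, 1)`. -/
def hcApp {F G : Aᵒᵖ × A ⥤ B} {H K : Bᵒᵖ × B ⥤ C}
    (ψ : ∀ Z : B, H.obj (op Z, Z) ⟶ K.obj (op Z, Z))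
    (φ : ∀ X : A, F.obj (op X, X) ⟶ G.obj (op X, X)) (X : A) :
    H.obj (op (G.obj (op X, X)), F.obj (op X, X)) ⟶
      K.obj (op (F.obj (op X, X)), G.obj (op X, X)) :=
  H.map (((φ X).op, 𝟙 (F.obj (op X, X))) :
      (op (G.obj (op X, X)), F.obj (op X, X)) ⟶ (op (F.obj (op X, X)), F.obj (op X, X))) ≫
    ψ (F.obj (op X, X)) ≫
    K.map ((𝟙 (op (F.obj (op X, X))), φ X) :
      (op (F.obj (op X, X)), F.obj (op X, X)) ⟶ (op (F.obj (op X, X)), G.obj (op X, X)))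

/-- Dinaturality, in its single variable, of the horizontal composition of two families:
the hexagon between the composite functors `H(Gᵒᵖ, F)` and `K(Fᵒᵖ, G)`. -/
def HCIsDinatural {F G : Aᵒᵖ × A ⥤ B} {H K : Bᵒᵖ × B ⥤ C}
    (ψ : ∀ Z : B, H.obj (op Z, Z) ⟶ K.obj (op Z, Z))
    (φ : ∀ X : A, F.obj (op X, X) ⟶ G.obj (op X, X)) : Prop :=
  ∀ {X Y : A} (f : X ⟶ Y),
    H.map (((G.map ((𝟙 (op X), f) : (op X, X) ⟶ (op X, Y))).op,
        F.map ((f.op, 𝟙 X) : (op Y, X) ⟶ (op X, X))) :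
        (op (G.obj (op X, Y)), F.obj (op Y, X)) ⟶ (op (G.obj (op X, X)), F.obj (op X, X))) ≫
      hcApp ψ φ X ≫
      K.map (((F.map ((f.op, 𝟙 X) : (op Y, X) ⟶ (op X, X))).op,
        G.map ((𝟙 (op X), f) : (op X, X) ⟶ (op X, Y))) :
        (op (F.obj (op X, X)), G.obj (op X, X)) ⟶ (op (F.obj (op Y, X)), G.obj (op X, Y))) =
    H.map (((G.map ((f.op, 𝟙 Y) : (op Y, Y) ⟶ (op X, Y))).op,
        F.map ((𝟙 (op Y), f) : (op Y, X) ⟶ (op Y, Y))) :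
        (op (G.obj (op X, Y)), F.obj (op Y, X)) ⟶ (op (G.obj (op Y, Y)), F.obj (op Y, Y))) ≫
      hcApp ψ φ Y ≫
      K.map (((F.map ((𝟙 (op Y), f) : (op Y, X) ⟶ (op Y, Y))).op,
        G.map ((f.op, 𝟙 Y) : (op Y, Y) ⟶ (op X, Y))) :
        (op (F.obj (op Y, Y)), G.obj (op Y, Y)) ⟶ (op (F.obj (op Y, X)), G.obj (op X, Y)))

/-! For `p : N ⟶ Z` and `q : Z ⟶ M`, dinaturality of `ψ` at `p` shows that `ψ_Z` conjugated by
`H(q, p)` and `K(p, q)` depends only on `p ≫ q`. Both sides of the hexagon are of this form, with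
composites `F(f, 1) ≫ φ_X ≫ G(1, f)` and `F(1, f) ≫ φ_Y ≫ G(f, 1)`, and these agree by
dinaturality of `φ`. -/

namespace IsDinatural

variable {H K : Bᵒᵖ × B ⥤ C} {ψ : ∀ Z : B, H.obj (op Z, Z) ⟶ K.obj (op Z, Z)}

lemma map_app_map_eq_comp (hψ : IsDinatural ψ) {N Z M : B} (p : N ⟶ Z) (q : Z ⟶ M) :
    H.map ((q.op, p) : (op M, N) ⟶ (op Z, Z)) ≫ ψ Z ≫
        K.map ((p.op, q) : (op Z, Z) ⟶ (op N, M)) =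
      H.map (((p ≫ q).op, 𝟙 N) : (op M, N) ⟶ (op N, N)) ≫ ψ N ≫
        K.map ((𝟙 (op N), p ≫ q) : (op N, N) ⟶ (op N, M)) := calc
  _ = H.map ((q.op, 𝟙 N) : (op M, N) ⟶ (op Z, N)) ≫
        (H.map ((𝟙 (op Z), p) : (op Z, N) ⟶ (op Z, Z)) ≫ ψ Z ≫
          K.map ((p.op, 𝟙 Z) : (op Z, Z) ⟶ (op N, Z))) ≫
        K.map ((𝟙 (op N), q) : (op N, Z) ⟶ (op N, M)) := by
    rw [← Bifunctor.diagonal' H, ← Bifunctor.diagonal' K]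
    simp only [Category.assoc]
  _ = H.map ((q.op, 𝟙 N) : (op M, N) ⟶ (op Z, N)) ≫
        (H.map ((p.op, 𝟙 N) : (op Z, N) ⟶ (op N, N)) ≫ ψ N ≫
          K.map ((𝟙 (op N), p) : (op N, N) ⟶ (op N, Z))) ≫
        K.map ((𝟙 (op N), q) : (op N, Z) ⟶ (op N, M)) := by rw [hψ p]
  _ = _ := by
    rw [op_comp, Bifunctor.map_comp_id, Bifunctor.map_id_comp]
    simp only [Category.assoc]

end IsDinatural

lemma map_hcApp_map {F G : Aᵒᵖ × A ⥤ B} {H K : Bᵒᵖ × B ⥤ C}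
    (ψ : ∀ Z : B, H.obj (op Z, Z) ⟶ K.obj (op Z, Z))
    (φ : ∀ X : A, F.obj (op X, X) ⟶ G.obj (op X, X)) {X : A} {N M : B}
    (p : N ⟶ F.obj (op X, X)) (q : G.obj (op X, X) ⟶ M) :
    H.map ((q.op, p) : (op M, N) ⟶ _) ≫ hcApp ψ φ X ≫ K.map ((p.op, q) : _ ⟶ (op N, M)) =
      H.map (((φ X ≫ q).op, p) : (op M, N) ⟶ _) ≫ ψ (F.obj (op X, X)) ≫
        K.map ((p.op, φ X ≫ q) : _ ⟶ (op N, M)) := by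
  simp only [hcApp, ← Functor.map_comp_assoc, ← Functor.map_comp, Category.assoc, prod_comp,
    Category.id_comp, Category.comp_id, op_comp]

theorem stmt9 {F G : Aᵒᵖ × A ⥤ B} {H K : Bᵒᵖ × B ⥤ C}
    (φ : ∀ X : A, F.obj (op X, X) ⟶ G.obj (op X, X))
    (ψ : ∀ Z : B, H.obj (op Z, Z) ⟶ K.obj (op Z, Z))
    (hφ : IsDinatural φ) (hψ : IsDinatural ψ) :
    HCIsDinatural ψ φ := by
  intro X Y f
  rw [map_hcApp_map, map_hcApp_map, hψ.map_app_map_eq_comp,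
    hψ.map_app_map_eq_comp, hφ f]
end

section
/- Let C be a category, F,G,H,K,U,V : Cᵒᵖ × C ⥤ C functors, and φ : F → G, ψ : H → K, χ : U → V dinatural transformations. Then horizontal composition is associative: for every object A of C, ((χ ∗ ψ) ∗ φ)_A = (χ ∗ (ψ ∗ φ))_A, where (χ ∗ (ψ∗φ))_A = V(1, (ψ∗φ)_A) ∘ χ_{H(G(A,A),F(A,A))} ∘ U((ψ∗φ)_A, 1) and ((χ∗ψ) ∗ φ)_A = V(H(φ_A, 1_{F(A,A)}), K(1_{F(A,A)}, φ_A)) ∘ V(1, ψ_{F(A,A)}) ∘ χ_{H(F(A,A),F(A,A))} ∘ U(ψ_{F(A,A)}, 1) ∘ U(K(1_{F(A,A)}, φ_A), H(φ_A, 1_{F(A,A)})), both being morphisms U(K(F(A,A),G(A,A)), H(G(A,A),F(A,A))) → V(H(G(A,A),F(A,A)), K(F(A,A),G(A,A))). -/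
open CategoryTheory Opposite

universe v₁ u₁ v₂ u₂ v₃ u₃

variable {A : Type u₁} [Category.{v₁} A] {B : Type u₂} [Category.{v₂} B]
  {C : Type u₃} [Category.{v₃} C]

/-- Helper: collapsing a "whiskered" dinaturality square for `χ`. -/
theorem hc_helper {U V : Cᵒᵖ × C ⥤ C}
    (χ : ∀ Z : C, U.obj (op Z, Z) ⟶ V.obj (op Z, Z)) (hχ : IsDinatural χ)
    {P Q T : C} (a : P ⟶ Q) (s : Q ⟶ T) :
    U.map ((s.op, a) : (op T, P) ⟶ (op Q, Q)) ≫ χ Q ≫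
        V.map ((a.op, s) : (op Q, Q) ⟶ (op P, T)) =
      U.map (((a ≫ s).op, 𝟙 P) : (op T, P) ⟶ (op P, P)) ≫ χ P ≫
        V.map ((𝟙 (op P), a ≫ s) : (op P, P) ⟶ (op P, T)) := by
  have key := hχ a
  have h1 : ((s.op, a) : (op T, P) ⟶ (op Q, Q)) =
      (((s.op, 𝟙 P) : (op T, P) ⟶ (op Q, P)) ≫ ((𝟙 (op Q), a) : (op Q, P) ⟶ (op Q, Q)) :
        (op T, P) ⟶ (op Q, Q)) := by
    simp [prod_comp]
  have h2 : ((a.op, s) : (op Q, Q) ⟶ (op P, T)) =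
      (((a.op, 𝟙 Q) : (op Q, Q) ⟶ (op P, Q)) ≫ ((𝟙 (op P), s) : (op P, Q) ⟶ (op P, T)) :
        (op Q, Q) ⟶ (op P, T)) := by
    simp [prod_comp]
  have h3 : (((a ≫ s).op, 𝟙 P) : (op T, P) ⟶ (op P, P)) =
      (((s.op, 𝟙 P) : (op T, P) ⟶ (op Q, P)) ≫ ((a.op, 𝟙 P) : (op Q, P) ⟶ (op P, P)) :
        (op T, P) ⟶ (op P, P)) := by
    simp [prod_comp]
  have h4 : ((𝟙 (op P), a ≫ s) : (op P, P) ⟶ (op P, T)) =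
      (((𝟙 (op P), a) : (op P, P) ⟶ (op P, Q)) ≫ ((𝟙 (op P), s) : (op P, Q) ⟶ (op P, T)) :
        (op P, P) ⟶ (op P, T)) := by
    simp [prod_comp]
  rw [h1, h2, h3, h4, Functor.map_comp, Functor.map_comp, Functor.map_comp, Functor.map_comp]
  simp only [Category.assoc]
  rw [reassoc_of% key]

/-- Associativity of horizontal composition of classical dinatural
transformations: `((χ ∗ ψ) ∗ φ)_X = (χ ∗ (ψ ∗ φ))_X` for every object `X`, where both
sides are spelled out explicitly. -/
theorem hcomp_assoc {C : Type u₁} [Category.{v₁} C]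
    {F G H K U V : Cᵒᵖ × C ⥤ C}
    (φ : ∀ X : C, F.obj (op X, X) ⟶ G.obj (op X, X))
    (ψ : ∀ X : C, H.obj (op X, X) ⟶ K.obj (op X, X))
    (χ : ∀ X : C, U.obj (op X, X) ⟶ V.obj (op X, X))
    (hφ : IsDinatural φ) (hψ : IsDinatural ψ) (hχ : IsDinatural χ) (X : C) :
    -- ((χ ∗ ψ) ∗ φ)_X :
    (U.map (((K.map ((𝟙 (op (F.obj (op X, X))), φ X) :
          (op (F.obj (op X, X)), F.obj (op X, X)) ⟶ (op (F.obj (op X, X)), G.obj (op X, X)))).op,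
        H.map (((φ X).op, 𝟙 (F.obj (op X, X))) :
          (op (G.obj (op X, X)), F.obj (op X, X)) ⟶ (op (F.obj (op X, X)), F.obj (op X, X)))) :
        (op (K.obj (op (F.obj (op X, X)), G.obj (op X, X))), H.obj (op (G.obj (op X, X)), F.obj (op X, X))) ⟶
          (op (K.obj (op (F.obj (op X, X)), F.obj (op X, X))), H.obj (op (F.obj (op X, X)), F.obj (op X, X)))) ≫
      U.map (((ψ (F.obj (op X, X))).op, 𝟙 (H.obj (op (F.obj (op X, X)), F.obj (op X, X)))) :
          (op (K.obj (op (F.obj (op X, X)), F.obj (op X, X))), H.obj (op (F.obj (op X, X)), F.obj (op X, X))) ⟶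
          (op (H.obj (op (F.obj (op X, X)), F.obj (op X, X))), H.obj (op (F.obj (op X, X)), F.obj (op X, X)))) ≫
      χ (H.obj (op (F.obj (op X, X)), F.obj (op X, X))) ≫
      V.map ((𝟙 (op (H.obj (op (F.obj (op X, X)), F.obj (op X, X)))), ψ (F.obj (op X, X))) :
          (op (H.obj (op (F.obj (op X, X)), F.obj (op X, X))), H.obj (op (F.obj (op X, X)), F.obj (op X, X))) ⟶
          (op (H.obj (op (F.obj (op X, X)), F.obj (op X, X))), K.obj (op (F.obj (op X, X)), F.obj (op X, X)))) ≫
      V.map (((H.map (((φ X).op, 𝟙 (F.obj (op X, X))) :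
            (op (G.obj (op X, X)), F.obj (op X, X)) ⟶ (op (F.obj (op X, X)), F.obj (op X, X)))).op,
          K.map ((𝟙 (op (F.obj (op X, X))), φ X) :
            (op (F.obj (op X, X)), F.obj (op X, X)) ⟶ (op (F.obj (op X, X)), G.obj (op X, X)))) :
          (op (H.obj (op (F.obj (op X, X)), F.obj (op X, X))), K.obj (op (F.obj (op X, X)), F.obj (op X, X))) ⟶
          (op (H.obj (op (G.obj (op X, X)), F.obj (op X, X))), K.obj (op (F.obj (op X, X)), G.obj (op X, X)))))
    =
    -- (χ ∗ (ψ ∗ φ))_X :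
    (U.map (((hcApp ψ φ X).op, 𝟙 (H.obj (op (G.obj (op X, X)), F.obj (op X, X)))) :
        (op (K.obj (op (F.obj (op X, X)), G.obj (op X, X))), H.obj (op (G.obj (op X, X)), F.obj (op X, X))) ⟶
        (op (H.obj (op (G.obj (op X, X)), F.obj (op X, X))), H.obj (op (G.obj (op X, X)), F.obj (op X, X)))) ≫
      χ (H.obj (op (G.obj (op X, X)), F.obj (op X, X))) ≫
      V.map ((𝟙 (op (H.obj (op (G.obj (op X, X)), F.obj (op X, X)))), hcApp ψ φ X) :
        (op (H.obj (op (G.obj (op X, X)), F.obj (op X, X))), H.obj (op (G.obj (op X, X)), F.obj (op X, X))) ⟶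
        (op (H.obj (op (G.obj (op X, X)), F.obj (op X, X))), K.obj (op (F.obj (op X, X)), G.obj (op X, X))))) := by
  have main := hc_helper χ hχ
    (H.map (((φ X).op, 𝟙 (F.obj (op X, X))) :
      (op (G.obj (op X, X)), F.obj (op X, X)) ⟶ (op (F.obj (op X, X)), F.obj (op X, X))))
    (ψ (F.obj (op X, X)) ≫ K.map ((𝟙 (op (F.obj (op X, X))), φ X) :
      (op (F.obj (op X, X)), F.obj (op X, X)) ⟶ (op (F.obj (op X, X)), G.obj (op X, X))))
  simp only [hcApp, op_comp, ← Functor.map_comp_assoc, ← Functor.map_comp, Category.assoc,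
    prod_comp, Category.comp_id, Category.id_comp] at main ⊢
  exact main
end

section
/- Let N, M, L be Petri nets and f = (f_P, f_T) : N → M, g = (g_P, g_T) : N → L morphisms of Petri nets. Form the pushout (h_P : P_M → P_Q, k_P : P_L → P_Q) of (f_P, g_P) and the pushout (h_T : T_M → T_Q, k_T : T_L → T_Q) of (f_T, g_T) in Set, and equip Q = (P_Q, T_Q) with the unique input function in_Q : T_Q → 𝒫(P_Q) satisfying in_Q(h_T(t)) = h_P[in_M(t)] and in_Q(k_T(t)) = k_P[in_L(t)] (which exists by the universal property of the transition pushout), and similarly the unique output function out_Q. Then the square with legs (h_P, h_T) : M → Q and (k_P, k_T) : L → Q is a pushout in the category of Petri nets and Petri-net morphisms. -/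
/-- A Petri net with powerset-valued input and output functions. -/
structure PNet where
  P : Type
  T : Type
  [finP : Finite P]
  [finT : Finite T]
  inp : T → Set P
  out : T → Set P

/-- A morphism of Petri nets. -/
structure PNetHom (N M : PNet) where
  fP : N.P → M.P
  fT : N.T → M.T
  inp_eq : ∀ t, M.inp (fT t) = fP '' N.inp t
  out_eq : ∀ t, M.out (fT t) = fP '' N.out t

/-- Composition of morphisms of Petri nets. -/
def PNetHom.comp {N M L : PNet} (g : PNetHom M L) (f : PNetHom N M) : PNetHom N L where
  fP := g.fP ∘ f.fP
  fT := g.fT ∘ f.fT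
  inp_eq := by
    intro t
    show L.inp (g.fT (f.fT t)) = _
    rw [g.inp_eq, f.inp_eq, Set.image_comp]
  out_eq := by
    intro t
    show L.out (g.fT (f.fT t)) = _
    rw [g.out_eq, f.out_eq, Set.image_comp]

/-- A commuting square of functions is a pushout in `Set`. -/
def IsSetPushout {X Y Z W : Type} (f : X → Y) (g : X → Z) (h : Y → W) (k : Z → W) : Prop :=
  (∀ x, h (f x) = k (g x)) ∧
    ∀ (V : Type) (u : Y → V) (v : Z → V), (∀ x, u (f x) = v (g x)) →
      ∃! w : W → V, (∀ y, w (h y) = u y) ∧ ∀ z, w (k z) = v z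

theorem PNetHom.ext' {N M : PNet} {a b : PNetHom N M} (h1 : a.fP = b.fP)
    (h2 : a.fT = b.fT) : a = b := by
  cases a; cases b; cases h1; cases h2; rfl

/-- Joint surjectivity of the two legs of a set pushout. -/
theorem setPushout_surj {X Y Z W : Type} {f : X → Y} {g : X → Z} {h : Y → W} {k : Z → W}
    (hp : IsSetPushout f g h k) : ∀ w, (∃ y, h y = w) ∨ ∃ z, k z = w := by
  obtain ⟨w0, hw0, huniq⟩ := hp.2 Prop (fun _ => True) (fun _ => True) (fun _ => rfl)
  have e1 : (fun _ : W => True) = w0 := huniq _ ⟨fun _ => rfl, fun _ => rfl⟩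
  have e2 : (fun w : W => (∃ y, h y = w) ∨ ∃ z, k z = w) = w0 := by
    apply huniq
    constructor
    · intro y; exact eq_true (Or.inl ⟨y, rfl⟩)
    · intro z; exact eq_true (Or.inr ⟨z, rfl⟩)
  intro w
  have : ((∃ y, h y = w) ∨ ∃ z, k z = w) = True := by
    rw [congrFun e2 w, ← congrFun e1 w]
  exact this ▸ trivial

/-- **Statement 17.** Given morphisms of Petri nets `f : N → M` and `g : N → L`, a net
`Q` whose sets of places and transitions are the pushouts (in `Set`) of the places and
transitions of `M` and `L` over `N`, and whose input/output functions make the legs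
`h : M → Q`, `k : L → Q` morphisms of Petri nets, the resulting square is a pushout in
the category of Petri nets. -/
theorem pnet_pushout (N M L Q : PNet) (f : PNetHom N M) (g : PNetHom N L)
    (h : PNetHom M Q) (k : PNetHom L Q)
    (hP : IsSetPushout f.fP g.fP h.fP k.fP)
    (hT : IsSetPushout f.fT g.fT h.fT k.fT) :
    h.comp f = k.comp g ∧
      ∀ (R : PNet) (u : PNetHom M R) (v : PNetHom L R), u.comp f = v.comp g →
        ∃! w : PNetHom Q R, w.comp h = u ∧ w.comp k = v := by
  constructor
  · exact PNetHom.ext' (funext hP.1) (funext hT.1)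
  intro R u v huv
  have hcompP : ∀ x, u.fP (f.fP x) = v.fP (g.fP x) := fun x =>
    congrFun (congrArg PNetHom.fP huv) x
  have hcompT : ∀ x, u.fT (f.fT x) = v.fT (g.fT x) := fun x =>
    congrFun (congrArg PNetHom.fT huv) x
  obtain ⟨wP, ⟨hwP1, hwP2⟩, hwPu⟩ := hP.2 R.P u.fP v.fP hcompP
  obtain ⟨wT, ⟨hwT1, hwT2⟩, hwTu⟩ := hT.2 R.T u.fT v.fT hcompT
  have hsurj := setPushout_surj hT
  have winp : ∀ t, R.inp (wT t) = wP '' Q.inp t := by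
    intro t
    rcases hsurj t with ⟨m, rfl⟩ | ⟨l, rfl⟩
    · rw [hwT1, u.inp_eq, h.inp_eq, Set.image_image]
      exact Set.image_congr fun p _ => (hwP1 p).symm
    · rw [hwT2, v.inp_eq, k.inp_eq, Set.image_image]
      exact Set.image_congr fun p _ => (hwP2 p).symm
  have wout : ∀ t, R.out (wT t) = wP '' Q.out t := by
    intro t
    rcases hsurj t with ⟨m, rfl⟩ | ⟨l, rfl⟩
    · rw [hwT1, u.out_eq, h.out_eq, Set.image_image]
      exact Set.image_congr fun p _ => (hwP1 p).symm
    · rw [hwT2, v.out_eq, k.out_eq, Set.image_image]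
      exact Set.image_congr fun p _ => (hwP2 p).symm
  refine ⟨⟨wP, wT, winp, wout⟩, ⟨?_, ?_⟩, ?_⟩
  · exact PNetHom.ext' (funext hwP1) (funext hwT1)
  · exact PNetHom.ext' (funext hwP2) (funext hwT2)
  · intro w' ⟨hwh, hwk⟩
    have hP' : w'.fP = wP := hwPu _ ⟨fun y => congrFun (congrArg PNetHom.fP hwh) y,
      fun z => congrFun (congrArg PNetHom.fP hwk) z⟩
    have hT' : w'.fT = wT := hwTu _ ⟨fun y => congrFun (congrArg PNetHom.fT hwh) y,
      fun z => congrFun (congrArg PNetHom.fT hwk) z⟩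
    exact PNetHom.ext' hP' hT'
end

section
/- Let P : D → E be a weak Conduché fibration and let S be a class of morphisms of E such that every morphism of E is either an identity or a finite composite of morphisms belonging to S. If Q, Q' : D → F are functors that agree on objects and satisfy Q(d) = Q'(d) for every morphism d of D with P(d) ∈ S, then Q = Q'. (In particular, a functor out of D is completely determined on morphisms by its values on objects and on the morphisms whose P-image lies in S.) -/
open CategoryTheory

universe v₁ u₁ v₂ u₂ v₃ u₃

/-- A weak Conduché fibration: a functor that reflects identities and lifts
factorisations of images of morphisms. -/
structure IsWCF {D : Type u₁} {E : Type u₂} [Category.{v₁} D] [Category.{v₂} E]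
    (P : D ⥤ E) : Prop where
  id_reflect : ∀ {A B : D} (f : A ⟶ B) (h : P.obj A = P.obj B),
    P.map f = eqToHom h → ∃ hAB : A = B, f = eqToHom hAB
  comp_lift : ∀ {A B : D} (f : A ⟶ B) {X : E} (v : P.obj A ⟶ X) (u : X ⟶ P.obj B),
    P.map f = v ≫ u →
      ∃ (W : D) (h : A ⟶ W) (g : W ⟶ B) (e : P.obj W = X),
        f = h ≫ g ∧ P.map h = v ≫ eqToHom e.symm ∧ P.map g = eqToHom e ≫ u

/-- Finite composites of morphisms belonging to a class `S` of morphisms. -/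
inductive CompOf {E : Type u₂} [Category.{v₂} E] (S : ∀ {X Y : E}, (X ⟶ Y) → Prop) :
    ∀ {X Y : E}, (X ⟶ Y) → Prop
  | of {X Y : E} {f : X ⟶ Y} : S f → CompOf S f
  | comp {X Y Z : E} {f : X ⟶ Y} {g : Y ⟶ Z} : CompOf S f → CompOf S g → CompOf S (f ≫ g)

/-- **Statement 19.** Let `P : D → E` be a weak Conduché fibration and `S` a class of
morphisms of `E` such that every morphism of `E` is either an identity or a finite
composite of morphisms of `S`. If two functors `Q, Q' : D → F` agree on objects
and agree on every morphism of `D` whose `P`-image lies in `S`, then `Q = Q'`. -/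
theorem functor_determined_by_atoms {D : Type u₁} {E : Type u₂} {F : Type u₃}
    [Category.{v₁} D] [Category.{v₂} E] [Category.{v₃} F]
    (P : D ⥤ E) (hP : IsWCF P)
    (S : ∀ {X Y : E}, (X ⟶ Y) → Prop)
    (hgen : ∀ {X Y : E} (f : X ⟶ Y), (∃ h : X = Y, f = eqToHom h) ∨ CompOf S f)
    (Q Q' : D ⥤ F)
    (hobj : ∀ X : D, Q.obj X = Q'.obj X)
    (hmap : ∀ {A B : D} (d : A ⟶ B), S (P.map d) → HEq (Q.map d) (Q'.map d)) :
    Q = Q' := by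
  have key : ∀ {X Y : E} (f : X ⟶ Y), CompOf S f →
      ∀ {A B : D} (d : A ⟶ B) (eA : P.obj A = X) (eB : P.obj B = Y),
      P.map d = eqToHom eA ≫ f ≫ eqToHom eB.symm → HEq (Q.map d) (Q'.map d) := by
    intro X Y f hf
    induction hf with
    | of hs =>
      intro A B d eA eB hd
      subst eA; subst eB
      simp only [eqToHom_refl, Category.comp_id, Category.id_comp] at hd
      exact hmap d (hd ▸ hs)
    | @comp X Y Z f g hf hg ih₁ ih₂ =>
      intro A B d eA eB hd
      obtain ⟨W, h, g', e, hcomp, hh, hg'⟩ :=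
        hP.comp_lift d (eqToHom eA ≫ f) (g ≫ eqToHom eB.symm)
          (by rw [hd]; simp)
      have H1 : HEq (Q.map h) (Q'.map h) := ih₁ h eA e (by rw [hh]; simp)
      have H2 : HEq (Q.map g') (Q'.map g') := ih₂ g' e eB hg'
      rw [hcomp, Q.map_comp, Q'.map_comp]
      exact heq_comp (hobj A) (hobj W) (hobj B) H1 H2
  apply Functor.hext hobj
  intro A B d
  rcases hgen (P.map d) with ⟨hAB, hd⟩ | hd
  · obtain ⟨hAB', hd'⟩ := hP.id_reflect d hAB hd
    subst hAB'
    subst hd'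
    simp only [eqToHom_refl, Functor.map_id]
    rw [Q.map_id, Q'.map_id, hobj A]
  · exact key (P.map d) hd d rfl rfl (by simp)
end
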